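/- arXiv:math/0605276 — 7 statements merged into one kernel-verified Lean document; each statement's English description precedes it below -/
import Mathlib

section
/- Let Γ be a group acting on the circle S¹ by homeomorphisms such that every Γ-orbit is infinite. Then either every Γ-orbit is dense in S¹, or there is exactly one minimal set K for the action (a nonempty closed Γ-invariant set containing no proper nonempty closed Γ-invariant subset), and this unique minimal set K is homeomorphic to the Cantor set (equivalently, K is a nonempty compact, perfect, totally disconnected proper subset of S¹). -/
noncomputable section

open MeasureTheory Set Function
open scoped ENNReal

/-- The group of self-homeomorphisms of a topological space, under composition. -/
instance homeoGroup {X : Type*} [TopologicalSpace X] : Group (X ≃ₜ X) where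
  mul f g := g.trans f
  one := Homeomorph.refl X
  inv := Homeomorph.symm
  mul_assoc f g h := rfl
  one_mul f := by ext x; rfl
  mul_one f := by ext x; rfl
  inv_mul_cancel f := by ext x; exact f.symm_apply_apply x

@[simp] lemma homeo_mul_apply {X : Type*} [TopologicalSpace X] (f g : X ≃ₜ X) (x : X) :
    (f * g) x = f (g x) := rfl

/-- The circle `S¹ = ℝ/ℤ`. -/
abbrev Circle' := UnitAddCircle

/-- A homeomorphism of the circle `ℝ/ℤ` is orientation-preserving if it lifts to a strictly
increasing homeomorphism `F` of `ℝ` with `F (x + 1) = F x + 1`. -/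
def IsOrientationPreserving (h : Circle' ≃ₜ Circle') : Prop :=
  ∃ F : ℝ ≃ₜ ℝ, StrictMono F ∧ (∀ x : ℝ, F (x + 1) = F x + 1) ∧
    ∀ x : ℝ, h (x : Circle') = ((F x : ℝ) : Circle')

/-- An action on the circle is minimal and strongly proximal if every proper closed subset
can be moved inside any nonempty open subset by some group element. -/
def IsMinimalStronglyProximal {Γ : Type*} [Group Γ] (ρ : Γ →* (Circle' ≃ₜ Circle')) : Prop :=
  ∀ K : Set Circle', IsClosed K → K ≠ Set.univ → ∀ U : Set Circle', IsOpen U → U.Nonempty →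
    ∃ γ : Γ, (ρ γ) '' K ⊆ U

/-- A minimal set for an action by homeomorphisms: a nonempty closed invariant set containing
no proper nonempty closed invariant subset. -/
def IsMinimalSet {Γ X : Type*} [Group Γ] [TopologicalSpace X]
    (ρ : Γ →* (X ≃ₜ X)) (K : Set X) : Prop :=
  K.Nonempty ∧ IsClosed K ∧ (∀ γ : Γ, (ρ γ) '' K ⊆ K) ∧
    ∀ K' : Set X, K' ⊆ K → K'.Nonempty → IsClosed K' → (∀ γ : Γ, (ρ γ) '' K' ⊆ K') → K' = K

/-!
If some orbit is not dense, Zorn's lemma gives a minimal set `K ⊊ S¹` inside its closure.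
With infinite orbits, every minimal set is perfect, since its derived set is a nonempty closed
invariant subset of it; a proper minimal set has empty interior, since its frontier is such a
subset, and on the circle a set with empty interior is totally disconnected. Finally `K` lies in
every orbit closure `L`: otherwise `L` is covered by finitely many gaps of `K` (components of its
complement), and the endpoints of these gaps form a finite nonempty closed invariant subset of
`K`, which is infinite. Hence `K` lies in, and so equals, every minimal set.
-/

section Dynamics

variable {X Γ : Type*} [TopologicalSpace X] [Group Γ] {ρ : Γ →* (X ≃ₜ X)}

theorem image_eq_of_forall_image_subset {A : Set X} (hA : ∀ γ : Γ, ρ γ '' A ⊆ A) (γ : Γ) :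
    ρ γ '' A = A := by
  refine (hA γ).antisymm fun z hz => ⟨ρ γ⁻¹ z, hA γ⁻¹ ⟨z, hz, rfl⟩, ?_⟩
  rw [← homeo_mul_apply, ← map_mul, mul_inv_cancel, map_one]
  rfl

variable (ρ) in
theorem self_mem_closure_range (x : X) : x ∈ closure (range fun γ : Γ => ρ γ x) :=
  subset_closure ⟨1, show ρ 1 x = x by rw [map_one]; rfl⟩

variable (ρ) in
theorem image_closure_range_subset (x : X) (γ : Γ) :
    ρ γ '' closure (range fun δ => ρ δ x) ⊆ closure (range fun δ => ρ δ x) := by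
  rw [Homeomorph.image_closure]
  refine closure_mono ?_
  rintro _ ⟨_, ⟨δ, rfl⟩, rfl⟩
  exact ⟨γ * δ, by simp only [map_mul, homeo_mul_apply]⟩

theorem closure_range_subset {A : Set X} (hA : IsClosed A) (hinv : ∀ γ : Γ, ρ γ '' A ⊆ A)
    {x : X} (hx : x ∈ A) : closure (range fun γ => ρ γ x) ⊆ A :=
  closure_minimal (range_subset_iff.2 fun γ => hinv γ ⟨x, hx, rfl⟩) hA

theorem exists_isMinimalSet_subset [CompactSpace X] {L : Set X} (hne : L.Nonempty)
    (hcl : IsClosed L) (hinv : ∀ γ : Γ, ρ γ '' L ⊆ L) : ∃ K ⊆ L, IsMinimalSet ρ K := by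
  let S : Set (Set X) := {A | A.Nonempty ∧ IsClosed A ∧ ∀ γ : Γ, ρ γ '' A ⊆ A}
  have hchains : ∀ c ⊆ S, IsChain (· ⊆ ·) c → c.Nonempty → ∃ lb ∈ S, ∀ A ∈ c, lb ⊆ A := by
    intro c hcS hchain hcne
    have : Nonempty c := hcne.to_subtype
    refine ⟨⋂₀ c, ⟨?_, isClosed_sInter fun A hA => (hcS hA).2.1, ?_⟩,
      fun A hA => sInter_subset_of_mem hA⟩
    · refine IsCompact.nonempty_sInter_of_directed_nonempty_isCompact_isClosed
        (fun A hA B hB => ?_) (fun A hA => (hcS hA).1) (fun A hA => (hcS hA).2.1.isCompact)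
        (fun A hA => (hcS hA).2.1)
      exact (hchain.total hA hB).elim (fun h => ⟨A, hA, subset_rfl, h⟩)
        (fun h => ⟨B, hB, h, subset_rfl⟩)
    · rintro γ _ ⟨x, hx, rfl⟩ A hA
      exact (hcS hA).2.2 γ ⟨x, hx A hA, rfl⟩
  obtain ⟨K, hKL, hK⟩ := zorn_superset_nonempty S hchains L ⟨hne, hcl, hinv⟩
  exact ⟨K, hKL, hK.1.1, hK.1.2.1, hK.1.2.2,
    fun K' hK'K hne' hcl' hinv' => hK'K.antisymm (hK.2 ⟨hne', hcl', hinv'⟩ hK'K)⟩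

namespace IsMinimalSet

variable {K : Set X}

theorem infinite (horb : ∀ x : X, (range fun γ : Γ => ρ γ x).Infinite)
    (hK : IsMinimalSet ρ K) : K.Infinite := by
  obtain ⟨x, hx⟩ := hK.1
  exact (horb x).mono (range_subset_iff.2 fun γ => hK.2.2.1 γ ⟨x, hx, rfl⟩)

theorem perfect [CompactSpace X] [T1Space X]
    (horb : ∀ x : X, (range fun γ : Γ => ρ γ x).Infinite) (hK : IsMinimalSet ρ K) :
    Perfect K := by
  have hinf := hK.infinite horb
  obtain ⟨-, hcl, hinv, hmin⟩ := hK
  refine perfect_iff_eq_derivedSet.2 (hmin _ ((derivedSet_subset_closure K).trans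
    hcl.closure_subset) ?_ (isClosed_derivedSet K) fun γ => ?_).symm
  · obtain ⟨x, -, hx⟩ :=
      hinf.exists_accPt_of_subset_isCompact hcl.isCompact subset_rfl
    exact ⟨x, mem_derivedSet.2 hx⟩
  · simpa only [image_eq_of_forall_image_subset hinv γ] using
      (ρ γ).continuous.image_derivedSet (ρ γ).injective (A := K)

theorem interior_eq_empty [PreconnectedSpace X] (hK : IsMinimalSet ρ K) (hKu : K ≠ univ) :
    interior K = ∅ := by
  obtain ⟨hne, hcl, hinv, hmin⟩ := hK
  have hfr : frontier K = K := by
    refine hmin _ hcl.frontier_subset (nonempty_frontier_iff.2 ⟨hne, hKu⟩)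
      isClosed_frontier fun γ => ?_
    rw [Homeomorph.image_frontier, image_eq_of_forall_image_subset hinv γ]
  rw [← hfr, interior_frontier hcl]

end IsMinimalSet

end Dynamics

theorem IsOpen.disjoint_frontier_connectedComponentIn {X : Type*} [TopologicalSpace X]
    [LocallyConnectedSpace X] {U : Set X} (hU : IsOpen U) (x : X) :
    Disjoint (frontier (connectedComponentIn U x)) U := by
  refine disjoint_left.2 fun y hy hyU => hy.2 ?_
  obtain ⟨z, hzy, hzx⟩ := mem_closure_iff_nhds.1 hy.1 _
    (hU.connectedComponentIn.mem_nhds (mem_connectedComponentIn hyU))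
  rw [hU.connectedComponentIn.interior_eq, connectedComponentIn_eq hzx,
    ← connectedComponentIn_eq hzy]
  exact mem_connectedComponentIn hyU

theorem IsCompact.finite_image_connectedComponentIn {X : Type*} [TopologicalSpace X]
    [LocallyConnectedSpace X] {L U : Set X} (hL : IsCompact L) (hU : IsOpen U) (hLU : L ⊆ U) :
    (connectedComponentIn U '' L).Finite := by
  obtain ⟨t, -, ht⟩ := hL.elim_nhds_subcover (connectedComponentIn U)
    fun x hx => hU.connectedComponentIn.mem_nhds (mem_connectedComponentIn (hLU hx))
  refine (t.finite_toSet.image (connectedComponentIn U)).subset ?_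
  rintro _ ⟨z, hz, rfl⟩
  obtain ⟨x, hx, hzx⟩ := mem_iUnion₂.1 (ht hz)
  exact ⟨x, hx, connectedComponentIn_eq hzx⟩

namespace AddCircle

variable {p : ℝ}

instance : LocallyConnectedSpace (AddCircle p) :=
  QuotientAddGroup.isOpenQuotientMap_mk.isQuotientMap.isCoinducing.locallyConnectedSpace

theorem exists_coe_image_eq_of_isPreconnected [Fact (0 < p)] {C : Set (AddCircle p)}
    (hC : IsPreconnected C) {a : ℝ} (ha : (a : AddCircle p) ∉ C) :
    ∃ D : Set ℝ, IsPreconnected D ∧ D ⊆ Ico a (a + p) ∧ ((↑) : ℝ → AddCircle p) '' D = C := by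
  refine ⟨(fun x => (equivIco p a x : ℝ)) '' C, hC.image _ ?_, ?_, ?_⟩
  · refine continuousOn_of_forall_continuousAt fun x hx => ?_
    exact continuousAt_subtype_val.comp (continuousAt_equivIco p a (ne_of_mem_of_not_mem hx ha))
  · rintro _ ⟨x, -, rfl⟩
    exact (equivIco p a x).2
  · rw [image_image]
    simp

theorem coe_image_Ioo_csInf_csSup_subset_interior {D : Set ℝ} (hD : IsConnected D)
    (hb : BddBelow D) (ha : BddAbove D) :
    ((↑) : ℝ → AddCircle p) '' Ioo (sInf D) (sSup D) ⊆ interior ((↑) '' D) :=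
  interior_maximal (image_mono (hD.Ioo_csInf_csSup_subset hb ha))
    (QuotientAddGroup.isOpenMap_coe _ isOpen_Ioo)

theorem frontier_coe_image_subset {D : Set ℝ} (hD : IsConnected D) (hb : BddBelow D)
    (ha : BddAbove D) :
    frontier (((↑) : ℝ → AddCircle p) '' D) ⊆ (↑) '' {sInf D, sSup D} := by
  have hcl : closure (((↑) : ℝ → AddCircle p) '' D) ⊆ (↑) '' Icc (sInf D) (sSup D) :=
    closure_minimal (image_mono (subset_Icc_csInf_csSup hb ha))
      (isCompact_Icc.image (AddCircle.continuous_mk' p)).isClosed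
  rintro z ⟨hz, hzi⟩
  obtain ⟨w, hw, rfl⟩ := hcl hz
  refine mem_image_of_mem _ (by_contra fun hw' => hzi ?_)
  exact coe_image_Ioo_csInf_csSup_subset_interior hD hb ha
    ⟨w, (Icc_sdiff_both (a := sInf D) (b := sSup D)).subset ⟨hw, hw'⟩, rfl⟩

theorem finite_frontier_of_isPreconnected [Fact (0 < p)] {C : Set (AddCircle p)}
    (hC : IsPreconnected C) {x : AddCircle p} (hx : x ∉ C) : (frontier C).Finite := by
  rcases C.eq_empty_or_nonempty with rfl | hne
  · simp
  induction x using QuotientAddGroup.induction_on with | H a => ?_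
  obtain ⟨D, hD, hDa, rfl⟩ := exists_coe_image_eq_of_isPreconnected hC hx
  exact ((toFinite _).image _).subset (frontier_coe_image_subset ⟨hne.of_image, hD⟩
    (bddBelow_Ico.mono hDa) (bddAbove_Ico.mono hDa))

theorem interior_nonempty_of_isPreconnected [Fact (0 < p)] {C : Set (AddCircle p)}
    (hC : IsPreconnected C) {x : AddCircle p} (hx : x ∉ C) {y z : AddCircle p} (hy : y ∈ C)
    (hz : z ∈ C) (hyz : y ≠ z) : (interior C).Nonempty := by
  induction x using QuotientAddGroup.induction_on with | H a => ?_
  obtain ⟨D, hD, hDa, rfl⟩ := exists_coe_image_eq_of_isPreconnected hC hx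
  obtain ⟨s, hs, rfl⟩ := hy
  obtain ⟨t, ht, rfl⟩ := hz
  have hb : BddBelow D := bddBelow_Ico.mono hDa
  have ha : BddAbove D := bddAbove_Ico.mono hDa
  have hlt : sInf D < sSup D := calc
    sInf D ≤ min s t := le_min (csInf_le hb hs) (csInf_le hb ht)
    _ < max s t := min_lt_max.2 (ne_of_apply_ne _ hyz)
    _ ≤ sSup D := max_le (le_csSup ha hs) (le_csSup ha ht)
  exact ((nonempty_Ioo.2 hlt).image _).mono
    (coe_image_Ioo_csInf_csSup_subset_interior ⟨⟨s, hs⟩, hD⟩ hb ha)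

theorem isTotallyDisconnected_of_interior_eq_empty [Fact (0 < p)] {K : Set (AddCircle p)}
    (hK : interior K = ∅) : IsTotallyDisconnected K := by
  intro t htK ht x hx y hy
  by_contra hxy
  have ht_ne : t ≠ univ := by
    rintro rfl
    rw [univ_subset_iff.1 htK, interior_univ] at hK
    exact univ_nonempty.ne_empty hK
  obtain ⟨z, hz⟩ := (ne_univ_iff_exists_notMem t).1 ht_ne
  exact (interior_nonempty_of_isPreconnected ht hz hx hy hxy).ne_empty
    (subset_empty_iff.1 (hK ▸ interior_mono htK))

end AddCircle

theorem IsMinimalSet.subset_closure_range {Γ : Type*} [Group Γ] {p : ℝ} [Fact (0 < p)]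
    {ρ : Γ →* (AddCircle p ≃ₜ AddCircle p)} (horb : ∀ x, (range fun γ : Γ => ρ γ x).Infinite)
    {K : Set (AddCircle p)} (hK : IsMinimalSet ρ K) (x : AddCircle p) :
    K ⊆ closure (range fun γ => ρ γ x) := by
  set L := closure (range fun γ => ρ γ x)
  have hLinv := image_closure_range_subset ρ x
  have hinf := hK.infinite horb
  obtain ⟨⟨k, hk⟩, hcl, hinv, hmin⟩ := hK
  suffices hLK : (L ∩ K).Nonempty by
    rw [← hmin _ inter_subset_right hLK (isClosed_closure.inter hcl) fun γ =>
      (image_inter_subset _ _ _).trans (inter_subset_inter (hLinv γ) (hinv γ))]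
    exact inter_subset_left
  refine not_disjoint_iff_nonempty_inter.1 fun hLK => ?_
  have hU : IsOpen Kᶜ := hcl.isOpen_compl
  have hLU : L ⊆ Kᶜ := hLK.subset_compl_right
  have hUinv (γ : Γ) : ρ γ '' Kᶜ = Kᶜ := by
    rw [Homeomorph.image_compl, image_eq_of_forall_image_subset hinv γ]
  have hk_notMem (z : AddCircle p) : k ∉ connectedComponentIn Kᶜ z :=
    fun h => connectedComponentIn_subset _ z h hk
  set E := ⋃ z ∈ L, frontier (connectedComponentIn Kᶜ z)
  have hEfin : E.Finite := by
    rw [show E = ⋃ J ∈ connectedComponentIn Kᶜ '' L, frontier J from biUnion_image.symm]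
    refine (isClosed_closure.isCompact.finite_image_connectedComponentIn hU hLU).biUnion ?_
    rintro _ ⟨z, -, rfl⟩
    exact AddCircle.finite_frontier_of_isPreconnected isPreconnected_connectedComponentIn
      (hk_notMem z)
  have hEK : E ⊆ K := iUnion₂_subset fun z _ =>
    disjoint_compl_right_iff_subset.1 (hU.disjoint_frontier_connectedComponentIn z)
  have hEne : E.Nonempty := by
    obtain ⟨z, hz⟩ : L.Nonempty := ⟨x, self_mem_closure_range ρ x⟩
    obtain ⟨y, hy⟩ := nonempty_frontier_iff.2
      ⟨⟨z, mem_connectedComponentIn (hLU hz)⟩, fun h => hk_notMem z (h ▸ mem_univ k)⟩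
    exact ⟨y, mem_iUnion₂.2 ⟨z, hz, hy⟩⟩
  have hEinv (γ : Γ) : ρ γ '' E ⊆ E := by
    rw [image_iUnion₂]
    refine iUnion₂_subset fun z hz => ?_
    rw [Homeomorph.image_frontier, (ρ γ).image_connectedComponentIn (hLU hz), hUinv γ]
    exact subset_iUnion₂_of_subset (ρ γ z) (hLinv γ ⟨z, hz, rfl⟩) subset_rfl
  exact hinf (hmin E hEK hEne hEfin.isClosed hEinv ▸ hEfin)

/-- If a group `Γ` acts on the circle by homeomorphisms with all orbits infinite, then either
every orbit is dense, or there is exactly one minimal set which is homeomorphic to a Cantor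
set (a nonempty compact, perfect, totally disconnected proper subset of the circle). -/
theorem statement2 {Γ : Type*} [Group Γ] (ρ : Γ →* (Circle' ≃ₜ Circle'))
    (horb : ∀ p : Circle', (Set.range fun γ : Γ => ρ γ p).Infinite) :
    (∀ p : Circle', Dense (Set.range fun γ : Γ => ρ γ p)) ∨
      ((∃! K : Set Circle', IsMinimalSet ρ K) ∧
        ∀ K : Set Circle', IsMinimalSet ρ K →
          K.Nonempty ∧ IsCompact K ∧ Perfect K ∧ IsTotallyDisconnected K ∧ K ≠ Set.univ) := by
  refine or_iff_not_imp_left.2 fun hdense => ?_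
  obtain ⟨x, hx⟩ := not_forall.1 hdense
  obtain ⟨K, hKL, hK⟩ := exists_isMinimalSet_subset ⟨x, self_mem_closure_range ρ x⟩
    isClosed_closure (image_closure_range_subset ρ x)
  have hKu : K ≠ univ := fun h => hx (dense_iff_closure_eq.2 (univ_subset_iff.1 (h ▸ hKL)))
  have huniq (M : Set Circle') (hM : IsMinimalSet ρ M) : M = K := by
    obtain ⟨m, hm⟩ := hM.1
    exact (hM.2.2.2 K ((hK.subset_closure_range horb m).trans
      (closure_range_subset hM.2.1 hM.2.2.1 hm)) hK.1 hK.2.1 hK.2.2.1).symm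
  refine ⟨⟨K, hK, huniq⟩, fun M hM => ?_⟩
  obtain rfl := huniq M hM
  exact ⟨hM.1, hM.2.1.isCompact, hM.perfect horb,
    AddCircle.isTotallyDisconnected_of_interior_eq_empty (hM.interior_eq_empty hKu), hKu⟩
end
end

section
/- Let Γ be a group acting on the circle S¹ = ℝ/ℤ by orientation-preserving homeomorphisms and leaving invariant a Borel probability measure μ on S¹. Then either Γ has a finite orbit on S¹, or there exist a continuous degree-one monotone surjection f : S¹ → S¹ (i.e. f admits a continuous nondecreasing lift F : ℝ → ℝ with F(x+1) = F(x)+1 for all x) and a group homomorphism r : Γ → ℝ/ℤ with dense image such that f(γ·x) = r(γ) + f(x) for all γ ∈ Γ and all x ∈ S¹. Moreover, if Γ has no finite orbit and μ has full support (supp μ = S¹), then f can be taken to be a homeomorphism, so Γ is conjugate in Homeo(S¹) to a group of rotations. -/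
noncomputable section

open MeasureTheory Set Function
open scoped ENNReal

/-!
Lift `μ` to the `ℤ`-periodic measure `μ̃` on `ℝ` and let `F` be its distribution function,
normalised by `F 0 = 0`; then `F (x + 1) = F x + 1`, so `F` descends to a degree-one monotone
map `f` of the circle. Every lift `L` of `ρ γ` preserves `μ̃`, hence `F ∘ L - F` is a constant,
whose class mod `1` is `r γ`; this gives `f ∘ ρ γ = r γ + f`.

An atom of `μ` has a finite orbit, all points of the orbit carrying the same mass. Otherwise `F`
is continuous and `f` is onto. If `r` had non-dense image, the image would be finite, and each
element of `ker r` has a lift `P` with `F ∘ P = F`; such a `P` fixes every point of increase of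
`F`, so the orbit of such a point would be finite. Full support makes `F` strictly increasing,
and then `f` is a homeomorphism.
-/

open Filter Topology

lemma IsOrientationPreserving.exists_circleDeg1Lift {g : Circle' ≃ₜ Circle'}
    (hg : IsOrientationPreserving g) :
    ∃ L : CircleDeg1Lift, StrictMono L ∧ Surjective L ∧ ∀ x : ℝ, g x = L x := by
  obtain ⟨F, hF, hF1, hgF⟩ := hg
  exact ⟨⟨⟨F, hF.monotone⟩, hF1⟩, hF, F.surjective, hgF⟩

lemma AddCircle.dense_or_finite_addSubgroup {p : ℝ} [Fact (0 < p)] (H : AddSubgroup (AddCircle p)) :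
    Dense (H : Set (AddCircle p)) ∨ (H : Set (AddCircle p)).Finite := by
  refine or_iff_not_imp_left.mpr fun hH => ?_
  obtain ⟨a, ha, rfl⟩ : ∃ a, addOrderOf a ≠ 0 ∧ H = .zmultiples a := by
    simpa using AddCircle.dense_addSubgroup_iff_ne_zmultiples.not.mp hH
  exact finite_zmultiples.mpr (addOrderOf_pos_iff.mp (Nat.pos_of_ne_zero ha))

lemma dense_or_finite_range_of_map_mul {G : Type*} [Group G] {p : ℝ} [Fact (0 < p)]
    {r : G → AddCircle p} (hr : ∀ a b, r (a * b) = r a + r b) :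
    Dense (range r) ∨ (range r).Finite := by
  have h1 : r 1 = 0 := by simpa using hr 1 1
  exact AddCircle.dense_or_finite_addSubgroup
    { carrier := range r
      add_mem' := by rintro _ _ ⟨a, rfl⟩ ⟨b, rfl⟩; exact ⟨a * b, hr a b⟩
      zero_mem' := ⟨1, h1⟩
      neg_mem' := by
        rintro _ ⟨a, rfl⟩
        exact ⟨a⁻¹, eq_neg_of_add_eq_zero_left (by rw [← hr, inv_mul_cancel, h1])⟩ }

lemma finite_range_of_factorsThrough {α β γ : Type*} [Nonempty α] {r : α → β} {φ : α → γ}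
    (hr : (range r).Finite) (hφ : φ.FactorsThrough r) : (range φ).Finite :=
  (hr.image fun z => φ (invFun r z)).subset <| by
    rintro _ ⟨a, rfl⟩
    exact ⟨r a, mem_range_self a, hφ (invFun_eq ⟨a, rfl⟩)⟩

def IsPointOfIncrease (F : ℝ → ℝ) (x : ℝ) : Prop := ∀ ⦃a b⦄, a < x → x < b → F a < F b

lemma exists_isPointOfIncrease {F : ℝ → ℝ} (hF : Monotone F) {a b : ℝ} (hab : F a < F b) :
    ∃ x, IsPointOfIncrease F x := by
  set S := {x | F a < F x}
  have hbdd : BddBelow S := ⟨a, fun x hx => le_of_not_ge fun hxa => not_lt.mpr (hF hxa) hx⟩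
  refine ⟨sInf S, fun u v hu hv => ?_⟩
  obtain ⟨w, hwS, hwv⟩ := exists_lt_of_csInf_lt ⟨b, hab⟩ hv
  have huS : u ∉ S := fun huS => (csInf_le hbdd huS).not_gt hu
  calc F u ≤ F a := not_lt.mp huS
    _ < F w := hwS
    _ ≤ F v := hF hwv.le

lemma IsPointOfIncrease.apply_eq_self {F P : ℝ → ℝ} {x : ℝ} (hx : IsPointOfIncrease F x)
    (hP : StrictMono P) (hPs : Surjective P) (hFP : ∀ t, F (P t) = F t) : P x = x := by
  obtain ⟨y, hy⟩ := hPs x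
  rcases lt_trichotomy (P x) x with h | h | h
  · have := hx h (hP.lt_iff_lt.mp (by rwa [hy]))
    rw [hFP, ← hFP y, hy] at this
    exact (lt_irrefl _ this).elim
  · exact h
  · have := hx (hP.lt_iff_lt.mp (by rwa [hy])) h
    rw [hFP, ← hFP y, hy] at this
    exact (lt_irrefl _ this).elim

lemma measureReal_Ico_add_Ico (ν : Measure ℝ) [IsLocallyFiniteMeasure ν] {a b c : ℝ}
    (hab : a ≤ b) (hbc : b ≤ c) : ν.real (Ico a b) + ν.real (Ico b c) = ν.real (Ico a c) := by
  rw [← Ico_union_Ico_eq_Ico hab hbc, measureReal_union Ico_disjoint_Ico_same measurableSet_Ico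
    measure_Ico_lt_top.ne measure_Ico_lt_top.ne]

namespace CircleMeasure

lemma coe_eq_coe_iff_exists_int {a b : ℝ} : (a : Circle') = b ↔ ∃ n : ℤ, b = a + n := by
  rw [QuotientAddGroup.eq, AddSubgroup.mem_zmultiples_iff]
  constructor
  · rintro ⟨n, hn⟩
    exact ⟨n, by simp only [zsmul_eq_mul, mul_one] at hn; linarith⟩
  · rintro ⟨n, rfl⟩
    exact ⟨n, by simp⟩

def reprIco (y : Circle') : ℝ := AddCircle.equivIco 1 0 y

lemma measurable_reprIco : Measurable reprIco :=
  measurable_subtype_coe.comp (AddCircle.measurableEquivIco 1 0).measurable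

@[simp] lemma coe_reprIco (y : Circle') : ((reprIco y : ℝ) : Circle') = y :=
  (AddCircle.equivIco 1 0).symm_apply_apply y

lemma exists_eq_reprIco_add {x : ℝ} {y : Circle'} (h : (x : Circle') = y) :
    ∃ n : ℤ, x = reprIco y + n :=
  coe_eq_coe_iff_exists_int.mp (by rw [coe_reprIco, h])

/-- The number of lifts of `y` that lie in `s`. -/
def fibreCount (s : Set ℝ) (y : Circle') : ℝ≥0∞ := ∑' n : ℤ, s.indicator 1 (reprIco y + n)

lemma measurable_fibreCount {s : Set ℝ} (hs : MeasurableSet s) : Measurable (fibreCount s) :=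
  Measurable.tsum fun _ => (measurable_one.indicator hs).comp (measurable_reprIco.add_const _)

lemma fibreCount_preimage (L : CircleDeg1Lift) {g : Circle' → Circle'}
    (hLg : ∀ x : ℝ, g x = L x) (s : Set ℝ) (y : Circle') :
    fibreCount (L ⁻¹' s) y = fibreCount s (g y) := by
  obtain ⟨m, hm⟩ := exists_eq_reprIco_add (x := L (reprIco y)) (y := g y)
    (by rw [← hLg, coe_reprIco])
  have hshift : ∀ n : ℤ, (L ⁻¹' s).indicator 1 (reprIco y + n) =
      s.indicator (1 : ℝ → ℝ≥0∞) (reprIco (g y) + ↑(m + n)) := fun n => by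
    rw [show reprIco (g y) + ↑(m + n) = L (reprIco y + n) by
      rw [L.map_add_int, hm]; push_cast; ring]
    rfl
  simp only [fibreCount, hshift]
  exact (Equiv.addLeft m).tsum_eq fun n : ℤ => s.indicator 1 (reprIco (g y) + n)

lemma fibreCount_Ico_add_one (a : ℝ) (y : Circle') : fibreCount (Ico a (a + 1)) y = 1 := by
  have hmem : ∀ n : ℤ, reprIco y + n ∈ Ico a (a + 1) ↔ n = ⌈a - reprIco y⌉ := fun n => by
    rw [eq_comm, Int.ceil_eq_iff, mem_Ico]
    constructor <;> rintro ⟨h₁, h₂⟩ <;> constructor <;> linarith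
  rw [fibreCount, tsum_eq_single ⌈a - reprIco y⌉]
  · simp [(hmem _).mpr rfl]
  · intro n hn
    simp [(hmem n).not.mpr hn]

lemma indicator_image_coe_le_fibreCount (s : Set ℝ) (y : Circle') :
    (((↑) : ℝ → Circle') '' s).indicator 1 y ≤ fibreCount s y := by
  by_cases hy : y ∈ ((↑) : ℝ → Circle') '' s
  · obtain ⟨x, hx, rfl⟩ := hy
    obtain ⟨n, hn⟩ := exists_eq_reprIco_add (rfl : (x : Circle') = x)
    calc _ ≤ (1 : ℝ≥0∞) := indicator_le_self' (fun _ _ => zero_le_one) _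
      _ = s.indicator 1 (reprIco x + n) := by simp [← hn, hx]
      _ ≤ fibreCount s x := ENNReal.le_tsum n
  · simp [hy]

/-- The `ℤ`-periodic measure on `ℝ` that projects to `μ` on each interval `[n, n + 1)`. -/
def liftMeasure (μ : Measure Circle') : Measure ℝ :=
  Measure.sum fun n : ℤ => μ.map fun y => reprIco y + n

section liftMeasure

variable (μ : Measure Circle')

lemma liftMeasure_apply {s : Set ℝ} (hs : MeasurableSet s) :
    liftMeasure μ s = ∫⁻ y, fibreCount s y ∂μ := by
  have hmeas : ∀ n : ℤ, Measurable fun y => reprIco y + n :=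
    fun n => measurable_reprIco.add_const _
  simp only [liftMeasure, Measure.sum_apply _ hs, fibreCount]
  rw [lintegral_tsum (f := fun (n : ℤ) y => s.indicator 1 (reprIco y + n))
    fun n => ((measurable_one.indicator hs).comp (hmeas n)).aemeasurable]
  congr 1 with n
  rw [Measure.map_apply (hmeas n) hs, ← lintegral_indicator_one (hmeas n hs)]
  rfl

lemma liftMeasure_preimage (L : CircleDeg1Lift) {g : Circle' → Circle'} (hg : Measurable g)
    (hgμ : μ.map g = μ) (hLg : ∀ x : ℝ, g x = L x) {s : Set ℝ} (hs : MeasurableSet s) :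
    liftMeasure μ (L ⁻¹' s) = liftMeasure μ s := by
  rw [liftMeasure_apply μ (L.monotone.measurable hs), liftMeasure_apply μ hs]
  simp_rw [fibreCount_preimage L hLg]
  conv_rhs => rw [← hgμ]
  rw [lintegral_map (measurable_fibreCount hs) hg]

lemma liftMeasure_Ico_add_one (a : ℝ) : liftMeasure μ (Ico a (a + 1)) = μ univ := by
  simp [liftMeasure_apply μ measurableSet_Ico, fibreCount_Ico_add_one]

lemma measure_image_coe_le_liftMeasure {s : Set ℝ} (hs : IsOpen s) :
    μ (((↑) : ℝ → Circle') '' s) ≤ liftMeasure μ s := by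
  rw [liftMeasure_apply μ hs.measurableSet,
    ← lintegral_indicator_one (QuotientAddGroup.isOpenMap_coe s hs).measurableSet]
  exact lintegral_mono (indicator_image_coe_le_fibreCount s)

instance [IsFiniteMeasure μ] : IsLocallyFiniteMeasure (liftMeasure μ) where
  finiteAtNhds x := ⟨Ico (x - 1 / 2) (x - 1 / 2 + 1), Ico_mem_nhds (by linarith) (by linarith),
    by rw [liftMeasure_Ico_add_one]; exact measure_lt_top μ univ⟩

instance [NullSingletonClass μ] : NullSingletonClass (liftMeasure μ) where
  measure_singleton x := by
    rw [liftMeasure, Measure.sum_apply _ (measurableSet_singleton x)]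
    refine ENNReal.tsum_eq_zero.mpr fun n => ?_
    rw [Measure.map_apply (measurable_reprIco.add_const _) (measurableSet_singleton x)]
    refine measure_mono_null (fun y (hy : reprIco y + n = x) => ?_)
      (measure_singleton (μ := μ) ((x - n : ℝ) : Circle'))
    rw [mem_singleton_iff, ← hy, add_sub_cancel_right, coe_reprIco]

end liftMeasure

/-- The cumulative distribution function of `liftMeasure μ`, normalised by `cdf μ 0 = 0`. -/
def cdf (μ : Measure Circle') (x : ℝ) : ℝ :=
  (liftMeasure μ).real (Ico 0 x) - (liftMeasure μ).real (Ico x 0)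

section cdf

variable (μ : Measure Circle') [IsFiniteMeasure μ]

lemma cdf_sub_cdf {a b : ℝ} (hab : a ≤ b) : cdf μ b - cdf μ a = (liftMeasure μ).real (Ico a b) := by
  rcases le_total 0 a with h0a | ha0
  · have := measureReal_Ico_add_Ico (liftMeasure μ) h0a hab
    simp only [cdf, Ico_eq_empty_of_le h0a, Ico_eq_empty_of_le (h0a.trans hab), measureReal_empty]
    linarith
  rcases le_total 0 b with h0b | hb0
  · have := measureReal_Ico_add_Ico (liftMeasure μ) ha0 h0b
    simp only [cdf, Ico_eq_empty_of_le ha0, Ico_eq_empty_of_le h0b, measureReal_empty]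
    linarith
  · have := measureReal_Ico_add_Ico (liftMeasure μ) hab hb0
    simp only [cdf, Ico_eq_empty_of_le ha0, Ico_eq_empty_of_le hb0, measureReal_empty]
    linarith

lemma monotone_cdf : Monotone (cdf μ) := fun _ _ hab =>
  sub_nonneg.mp ((cdf_sub_cdf μ hab).symm ▸ measureReal_nonneg)

lemma continuous_cdf [NullSingletonClass μ] : Continuous (cdf μ) := by
  refine continuous_iff_continuousAt.mpr fun x => ?_
  have hsmall : Tendsto (fun y => (liftMeasure μ).real (Icc (x - dist y x) (x + dist y x)))
      (𝓝 x) (𝓝 0) :=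
    (ENNReal.tendsto_toReal ENNReal.zero_ne_top).comp <|
      (tendsto_measure_Icc (liftMeasure μ) x).comp <|
        (continuous_id.dist continuous_const).tendsto' x 0 (dist_self x)
  rw [ContinuousAt, tendsto_iff_dist_tendsto_zero]
  refine squeeze_zero (fun _ => dist_nonneg) (fun y => ?_) hsmall
  have hd : |y - x| = dist y x := (Real.dist_eq y x).symm
  rcases le_total x y with h | h
  · rw [Real.dist_eq, abs_of_nonneg (sub_nonneg.2 (monotone_cdf μ h)), cdf_sub_cdf μ h]
    refine measureReal_mono (Ico_subset_Icc_self.trans (Icc_subset_Icc ?_ ?_))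
      measure_Icc_lt_top.ne <;> linarith [le_abs_self (y - x), abs_nonneg (y - x)]
  · rw [dist_comm, Real.dist_eq, abs_of_nonneg (sub_nonneg.2 (monotone_cdf μ h)), cdf_sub_cdf μ h]
    refine measureReal_mono (Ico_subset_Icc_self.trans (Icc_subset_Icc ?_ ?_))
      measure_Icc_lt_top.ne <;> linarith [neg_abs_le (y - x), abs_nonneg (y - x)]

lemma strictMono_cdf (hμ : ∀ U : Set Circle', IsOpen U → U.Nonempty → 0 < μ U) :
    StrictMono (cdf μ) := by
  intro a b hab
  have hIoo : 0 < liftMeasure μ (Ioo a b) :=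
    (hμ _ (QuotientAddGroup.isOpenMap_coe _ isOpen_Ioo) ((nonempty_Ioo.2 hab).image _)).trans_le
      (measure_image_coe_le_liftMeasure μ isOpen_Ioo)
  have hIco : 0 < (liftMeasure μ).real (Ico a b) :=
    ENNReal.toReal_pos (hIoo.trans_le (measure_mono Ioo_subset_Ico_self)).ne'
      measure_Ico_lt_top.ne
  linarith [cdf_sub_cdf μ hab.le]

lemma cdf_comp_of_lift (L : CircleDeg1Lift) (hL : StrictMono L) {g : Circle' → Circle'}
    (hg : Measurable g) (hgμ : μ.map g = μ) (hLg : ∀ x : ℝ, g x = L x) (x : ℝ) :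
    cdf μ (L x) = cdf μ x + (cdf μ (L 0) - cdf μ 0) := by
  have hinc : ∀ a b, a ≤ b → cdf μ (L b) - cdf μ (L a) = cdf μ b - cdf μ a := fun a b hab => by
    have hpre : L ⁻¹' Ico (L a) (L b) = Ico a b := by
      ext t; simp [hL.le_iff_le, hL.lt_iff_lt]
    rw [cdf_sub_cdf μ hab, cdf_sub_cdf μ (L.monotone hab), measureReal_def, measureReal_def,
      ← liftMeasure_preimage μ L hg hgμ hLg measurableSet_Ico, hpre]
  rcases le_total 0 x with h | h
  · linarith [hinc 0 x h]
  · linarith [hinc x 0 h]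

end cdf

section circleCdf

variable (μ : Measure Circle') [IsProbabilityMeasure μ]

lemma cdf_add_one (x : ℝ) : cdf μ (x + 1) = cdf μ x + 1 := by
  have := cdf_sub_cdf μ (le_add_of_nonneg_right zero_le_one : x ≤ x + 1)
  rw [measureReal_def, liftMeasure_Ico_add_one, measure_univ, ENNReal.toReal_one] at this
  linarith

def cdfLift : CircleDeg1Lift := ⟨⟨cdf μ, monotone_cdf μ⟩, cdf_add_one μ⟩

lemma cdf_add_int (x : ℝ) (n : ℤ) : cdf μ (x + n) = cdf μ x + n := (cdfLift μ).map_add_int x n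

lemma periodic_coe_cdf : Periodic (fun x => (cdf μ x : Circle')) 1 := fun x => by
  simp only [cdf_add_one, AddCircle.coe_add_period]

def circleCdf : Circle' → Circle' := (periodic_coe_cdf μ).lift

@[simp] lemma circleCdf_coe (x : ℝ) : circleCdf μ x = cdf μ x := rfl

lemma continuous_circleCdf [NullSingletonClass μ] : Continuous (circleCdf μ) :=
  (QuotientAddGroup.isQuotientMap_mk _).continuous_iff.mpr
    ((AddCircle.continuous_mk' 1).comp (continuous_cdf μ))

lemma surjective_circleCdf [NullSingletonClass μ] : Surjective (circleCdf μ) := by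
  intro y
  obtain ⟨t, rfl⟩ := QuotientAddGroup.mk_surjective y
  obtain ⟨x, hx⟩ := (cdfLift μ).continuous_iff_surjective.mp (continuous_cdf μ) t
  exact ⟨x, congrArg _ hx⟩

lemma injective_circleCdf (hμ : ∀ U : Set Circle', IsOpen U → U.Nonempty → 0 < μ U) :
    Injective (circleCdf μ) := by
  intro y₁ y₂ h
  obtain ⟨x₁, rfl⟩ := QuotientAddGroup.mk_surjective y₁
  obtain ⟨x₂, rfl⟩ := QuotientAddGroup.mk_surjective y₂
  rw [circleCdf_coe, circleCdf_coe, coe_eq_coe_iff_exists_int] at h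
  obtain ⟨n, hn⟩ := h
  rw [← cdf_add_int] at hn
  exact coe_eq_coe_iff_exists_int.mpr ⟨n, (strictMono_cdf μ hμ).injective hn⟩

def rotationAngle (g : Circle' → Circle') : Circle' := circleCdf μ (g 0) - circleCdf μ 0

lemma circleCdf_apply_of_isOrientationPreserving {g : Circle' ≃ₜ Circle'}
    (hg : IsOrientationPreserving g) (hgμ : μ.map g = μ) (y : Circle') :
    circleCdf μ (g y) = rotationAngle μ g + circleCdf μ y := by
  obtain ⟨L, hL, -, hLg⟩ := hg.exists_circleDeg1Lift
  have key : ∀ x : ℝ,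
      circleCdf μ (g x) = ((cdf μ (L 0) - cdf μ 0 : ℝ) : Circle') + circleCdf μ x := fun x => by
    rw [hLg, circleCdf_coe, circleCdf_coe, cdf_comp_of_lift μ L hL g.continuous.measurable hgμ hLg,
      add_comm, AddCircle.coe_add]
  have h0 := key 0
  rw [AddCircle.coe_zero] at h0
  obtain ⟨x, rfl⟩ := QuotientAddGroup.mk_surjective y
  rw [rotationAngle, key x, h0]
  abel

lemma rotationAngle_comp {g : Circle' ≃ₜ Circle'} (hg : IsOrientationPreserving g)
    (hgμ : μ.map g = μ) (h : Circle' → Circle') :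
    rotationAngle μ (g ∘ h) = rotationAngle μ g + rotationAngle μ h := by
  have := circleCdf_apply_of_isOrientationPreserving μ hg hgμ (h 0)
  simp only [rotationAngle, comp_apply] at this ⊢
  rw [this]
  abel

lemma apply_coe_eq_self_of_rotationAngle_eq_zero {g : Circle' ≃ₜ Circle'}
    (hg : IsOrientationPreserving g) (hgμ : μ.map g = μ) (h0 : rotationAngle μ g = 0) {x : ℝ}
    (hx : IsPointOfIncrease (cdf μ) x) : g x = x := by
  obtain ⟨L, hL, hLs, hLg⟩ := hg.exists_circleDeg1Lift
  obtain ⟨n, hn⟩ : ∃ n : ℤ, cdf μ 0 = cdf μ (L 0) + n := by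
    rw [← coe_eq_coe_iff_exists_int, ← circleCdf_coe, ← circleCdf_coe, ← hLg, AddCircle.coe_zero]
    exact sub_eq_zero.mp h0
  have hfix : L x + n = x := by
    refine hx.apply_eq_self (P := fun t => L t + n) (hL.add_const _)
      (fun z => (hLs (z - n)).imp fun t ht => by simp [ht]) fun t => ?_
    rw [cdf_add_int, cdf_comp_of_lift μ L hL g.continuous.measurable hgμ hLg]
    linarith
  rw [hLg]
  exact coe_eq_coe_iff_exists_int.mpr ⟨n, hfix.symm⟩

end circleCdf

section action

variable {Γ : Type*} [Group Γ] (ρ : Γ →* (Circle' ≃ₜ Circle'))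

lemma finite_orbit_of_measure_singleton_ne_zero (μ : Measure Circle') [IsFiniteMeasure μ]
    (hinv : ∀ γ : Γ, μ.map (ρ γ) = μ) {p : Circle'} (hp : μ {p} ≠ 0) :
    (range fun γ : Γ => ρ γ p).Finite := by
  by_contra hinf
  refine measure_ne_top μ _ (Set.Infinite.meas_eq_top hinf ⟨μ {p}, hp, ?_⟩)
  rintro _ ⟨γ, rfl⟩
  conv_rhs => rw [← hinv γ]
  rw [Measure.map_apply (ρ γ).continuous.measurable (measurableSet_singleton _),
    ← image_singleton, (ρ γ).injective.preimage_image]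

lemma nullSingletonClass_of_forall_infinite_orbit (μ : Measure Circle') [IsFiniteMeasure μ]
    (hinv : ∀ γ : Γ, μ.map (ρ γ) = μ) (hinf : ∀ p : Circle', (range fun γ : Γ => ρ γ p).Infinite) :
    NullSingletonClass μ :=
  ⟨fun p => by_contra fun hp => hinf p (finite_orbit_of_measure_singleton_ne_zero ρ μ hinv hp)⟩

variable (μ : Measure Circle') [IsProbabilityMeasure μ]

lemma rotationAngle_map_mul (hop : ∀ γ : Γ, IsOrientationPreserving (ρ γ))
    (hinv : ∀ γ : Γ, μ.map (ρ γ) = μ) (γ δ : Γ) :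
    rotationAngle μ (ρ (γ * δ)) = rotationAngle μ (ρ γ) + rotationAngle μ (ρ δ) := by
  rw [show ⇑(ρ (γ * δ)) = ρ γ ∘ ρ δ by rw [map_mul]; rfl]
  exact rotationAngle_comp μ (hop γ) (hinv γ) _

lemma dense_range_rotationAngle (hop : ∀ γ : Γ, IsOrientationPreserving (ρ γ))
    (hinv : ∀ γ : Γ, μ.map (ρ γ) = μ) (hinf : ∀ p : Circle', (range fun γ : Γ => ρ γ p).Infinite) :
    Dense (range fun γ => rotationAngle μ (ρ γ)) := by
  have hr := rotationAngle_map_mul ρ μ hop hinv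
  refine (dense_or_finite_range_of_map_mul hr).resolve_right fun hfin => ?_
  obtain ⟨x, hx⟩ := exists_isPointOfIncrease (monotone_cdf μ) (a := 0) (b := 0 + 1)
    (by linarith [cdf_add_one μ 0])
  refine hinf x (finite_range_of_factorsThrough hfin fun γ δ hγδ => ?_)
  have hfix : ρ (δ⁻¹ * γ) x = x := by
    refine apply_coe_eq_self_of_rotationAngle_eq_zero μ (hop _) (hinv _) ?_ hx
    have := hr δ (δ⁻¹ * γ)
    rw [mul_inv_cancel_left, hγδ] at this
    exact left_eq_add.mp this
  calc ρ γ x = ρ δ (ρ (δ⁻¹ * γ) x) := by rw [← homeo_mul_apply, ← map_mul, mul_inv_cancel_left]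
    _ = ρ δ x := by rw [hfix]

end action

end CircleMeasure

open CircleMeasure

/-- A group acting on the circle by orientation-preserving homeomorphisms preserving a Borel
probability measure either has a finite orbit, or is semi-conjugate (via a degree-one
monotone map) to an action by rotations through a homomorphism with dense image; if moreover
there is no finite orbit and the invariant measure has full support, the semi-conjugacy can
be taken to be a homeomorphism. -/
theorem statement3 {Γ : Type*} [Group Γ] (ρ : Γ →* (Circle' ≃ₜ Circle'))
    (hop : ∀ γ : Γ, IsOrientationPreserving (ρ γ))
    (μ : Measure Circle') [IsProbabilityMeasure μ]
    (hinv : ∀ γ : Γ, Measure.map (ρ γ) μ = μ) :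
    ((∃ p : Circle', (Set.range fun γ : Γ => ρ γ p).Finite) ∨
      ∃ (F : ℝ → ℝ) (f : Circle' → Circle') (r : Γ → Circle'),
        Continuous F ∧ Monotone F ∧ (∀ x : ℝ, F (x + 1) = F x + 1) ∧
        (∀ x : ℝ, f (x : Circle') = ((F x : ℝ) : Circle')) ∧
        Continuous f ∧ Function.Surjective f ∧
        (∀ γ δ : Γ, r (γ * δ) = r γ + r δ) ∧ Dense (Set.range r) ∧
        (∀ (γ : Γ) (x : Circle'), f (ρ γ x) = r γ + f x)) ∧
    (((∀ p : Circle', (Set.range fun γ : Γ => ρ γ p).Infinite) ∧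
        (∀ U : Set Circle', IsOpen U → U.Nonempty → 0 < μ U)) →
      ∃ (f : Circle' ≃ₜ Circle') (r : Γ → Circle'),
        (∀ γ δ : Γ, r (γ * δ) = r γ + r δ) ∧ Dense (Set.range r) ∧
        (∀ (γ : Γ) (x : Circle'), f (ρ γ x) = r γ + f x)) := by
  have hmul := rotationAngle_map_mul ρ μ hop hinv
  have hsemiconj (γ : Γ) := circleCdf_apply_of_isOrientationPreserving μ (hop γ) (hinv γ)
  refine ⟨or_iff_not_imp_left.mpr fun hfin => ?_, fun ⟨hinf, hμ⟩ => ?_⟩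
  · have hinf : ∀ p : Circle', (range fun γ : Γ => ρ γ p).Infinite := not_exists.mp hfin
    have := nullSingletonClass_of_forall_infinite_orbit ρ μ hinv hinf
    exact ⟨cdf μ, circleCdf μ, _, continuous_cdf μ, monotone_cdf μ, cdf_add_one μ,
      circleCdf_coe μ, continuous_circleCdf μ, surjective_circleCdf μ, hmul,
      dense_range_rotationAngle ρ μ hop hinv hinf, hsemiconj⟩
  · have := nullSingletonClass_of_forall_infinite_orbit ρ μ hinv hinf
    let e : Circle' ≃ Circle' :=
      .ofBijective (circleCdf μ) ⟨injective_circleCdf μ hμ, surjective_circleCdf μ⟩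
    exact ⟨(continuous_circleCdf μ).homeoOfEquivCompactToT2 (f := e), _, hmul,
      dense_range_rotationAngle ρ μ hop hinv hinf, hsemiconj⟩
end
end

section
/- Let Γ be a countable group, ρ : Γ → Homeo(S¹) an action by homeomorphisms of the circle which is minimal and strongly proximal, and (B, ν) a standard probability space with a measurable quasi-invariant Γ-action such that the diagonal Γ-action on (B×B, ν⊗ν) is ergodic. If Φ : B → Prob(S¹) is a measurable Γ-equivariant map, then for (ν⊗ν)-almost every pair (x, y) ∈ B×B the supports of Φ(x) and Φ(y) are finite and unlinked: there exist two disjoint closed arcs I, J ⊂ S¹ with supp Φ(x) ⊆ I and supp Φ(y) ⊆ J. -/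
/-!
Ergodicity of the diagonal action and strong proximality give, for almost every pair `(x, y)`,
homeomorphisms `ρ γ` pushing almost all of `Φ x` into an arc `U` and almost all of `Φ y` into a
disjoint arc `V` at the same time. This makes `Φ x ⊗ Φ y` vanish on the diagonal. It also rules
out linked supports: if two points charged by `Φ x` separated two points charged by `Φ y` (or by
`Φ x`), then, after approximating by arcs with rational endpoints, ergodicity would move a
typical pair into that configuration while squeezing it, and the squeezing homeomorphism would
turn a separating pair into a pair inside `U` separating two points of `V`, which is impossible.
An infinite set is linked with itself, so the supports are finite; they are disjoint by the
diagonal statement, and two disjoint unlinked finite sets lie in disjoint closed arcs.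
-/

noncomputable section

open MeasureTheory Set Function
open scoped ENNReal

/-- A closed arc: a nonempty proper closed connected subset of the circle. -/
def IsClosedArc (I : Set Circle') : Prop :=
  I.Nonempty ∧ IsClosed I ∧ IsPreconnected I ∧ I ≠ Set.univ

/-- The (topological) support of a Borel measure on the circle. -/
def measSupport (μ : Measure Circle') : Set Circle' :=
  {p : Circle' | ∀ U : Set Circle', IsOpen U → p ∈ U → μ U ≠ 0}

namespace CircleBoundary

open Filter

def lift (a : ℝ) (z : Circle') : ℝ := AddCircle.equivIco 1 a z

lemma lift_mem_Ico (a : ℝ) (z : Circle') : lift a z ∈ Ico a (a + 1) :=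
  (AddCircle.equivIco 1 a z).2

@[simp] lemma coe_lift (a : ℝ) (z : Circle') : (lift a z : Circle') = z :=
  AddCircle.coe_equivIco

def arcIoo (s t : ℝ) : Set Circle' := (↑) '' Ioo s t

def arcIcc (s t : ℝ) : Set Circle' := (↑) '' Icc s t

lemma disjoint_arcIcc_arcIoo (p q : ℝ) : Disjoint (arcIcc p q) (arcIoo q (p + 1)) := by
  rw [Set.disjoint_left]
  rintro _ ⟨u, hu, rfl⟩ ⟨v, hv, huv⟩
  have hv' : v ∈ Ico u (u + 1) := ⟨by linarith [hu.2, hv.1], by linarith [hu.1, hv.2]⟩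
  have := (AddCircle.coe_eq_coe_iff_of_mem_Ico ⟨le_rfl, by linarith⟩ hv').1 huv.symm
  linarith [hu.2, hv.1]

lemma isOpen_arcIoo (s t : ℝ) : IsOpen (arcIoo s t) :=
  QuotientAddGroup.isOpenMap_coe _ isOpen_Ioo

lemma isClosed_arcIcc (s t : ℝ) : IsClosed (arcIcc s t) :=
  (isCompact_Icc.image (AddCircle.continuous_mk' 1)).isClosed

lemma nonempty_interior_arcIcc {s t : ℝ} (h : s < t) : (interior (arcIcc s t)).Nonempty :=
  ((nonempty_Ioo.2 h).image _).mono
    (interior_maximal (image_mono Ioo_subset_Icc_self) (isOpen_arcIoo s t))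

lemma isClosedArc_arcIcc {s t : ℝ} (hst : s ≤ t) (hts : t < s + 1) : IsClosedArc (arcIcc s t) := by
  refine ⟨(nonempty_Icc.2 hst).image _, isClosed_arcIcc s t,
    isPreconnected_Icc.image _ (AddCircle.continuous_mk' 1).continuousOn, fun huniv => ?_⟩
  have hout := disjoint_arcIcc_arcIoo s t
  rw [huniv, univ_disjoint] at hout
  exact ((nonempty_Ioo.2 hts).image _).ne_empty hout

/-- On the circle, `c` and `d` lie on different sides of `{a, b}`. -/
def Interleaved (a c b d : ℝ) : Prop := a < c ∧ c < b ∧ b < d ∧ d < a + 1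

def Linked (S T : Set Circle') : Prop :=
  ∃ a c b d : ℝ, Interleaved a c b d ∧
    (a : Circle') ∈ S ∧ (b : Circle') ∈ S ∧ (c : Circle') ∈ T ∧ (d : Circle') ∈ T

def Separates {X : Type*} [TopologicalSpace X] (P : Set X) (c d : X) : Prop :=
  ∀ A : Set X, IsPreconnected A → c ∈ A → d ∈ A → (A ∩ P).Nonempty

lemma Separates.image {X Y : Type*} [TopologicalSpace X] [TopologicalSpace Y] (h : X ≃ₜ Y)
    {P : Set X} {c d : X} (hs : Separates P c d) : Separates (h '' P) (h c) (h d) := by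
  intro A hA hc hd
  have hA' : IsPreconnected (h ⁻¹' A) := by
    rw [← h.image_symm]; exact hA.image _ h.symm.continuous.continuousOn
  obtain ⟨x, hxA, hxP⟩ := hs _ hA' hc hd
  exact ⟨h x, hxA, x, hxP, rfl⟩

lemma separates_of_interleaved {a c b d : ℝ} (h : Interleaved a c b d) :
    Separates {(a : Circle'), (b : Circle')} c d := by
  obtain ⟨hac, hcb, hbd, hda⟩ := h
  intro A hA hc hd
  by_contra hAP
  have hcover : A ⊆ arcIoo a b ∪ arcIoo b (a + 1) := by
    intro z hz
    obtain ⟨hr₁, hr₂⟩ := lift_mem_Ico a z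
    have hne : ∀ r : ℝ, (r : Circle') ∈ ({(a : Circle'), (b : Circle')} : Set Circle') →
        lift a z ≠ r := by
      rintro r hr rfl
      exact hAP ⟨z, hz, by rwa [coe_lift] at hr⟩
    rcases (hne b (by simp)).lt_or_gt with hb | hb
    · exact Or.inl ⟨lift a z, ⟨(hne a (by simp)).symm.lt_of_le hr₁, hb⟩, coe_lift a z⟩
    · exact Or.inr ⟨lift a z, ⟨hb, hr₂⟩, coe_lift a z⟩
  obtain ⟨z, -, hz₁, hz₂⟩ := hA _ _ (isOpen_arcIoo a b) (isOpen_arcIoo b (a + 1)) hcover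
    ⟨c, hc, c, ⟨hac, hcb⟩, rfl⟩ ⟨d, hd, d, ⟨hbd, hda⟩, rfl⟩
  exact ((disjoint_arcIcc_arcIoo a b).mono_left (image_mono Ioo_subset_Icc_self)).ne_of_mem
    hz₁ hz₂ rfl

lemma not_separates_of_mem_arcIcc {s t s' t' : ℝ} (h₁ : t < s') (h₂ : t' < s + 1) :
    ∀ a ∈ arcIcc s t, ∀ b ∈ arcIcc s t, ∀ c ∈ arcIcc s' t', ∀ d ∈ arcIcc s' t',
      ¬Separates {a, b} c d := by
  intro a ha b hb c hc d hd hs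
  have hsub : arcIcc s' t' ⊆ arcIoo t (s + 1) := image_mono (Icc_subset_Ioo h₁ h₂)
  have hdisj := disjoint_arcIcc_arcIoo s t
  obtain ⟨w, hw, rfl | rfl⟩ := hs (arcIoo t (s + 1)) (isPreconnected_Ioo.image _
    (AddCircle.continuous_mk' 1).continuousOn) (hsub hc) (hsub hd)
  exacts [hdisj.ne_of_mem ha hw rfl, hdisj.ne_of_mem hb hw rfl]

lemma exists_lift_bounds {S : Set Circle'} (hS : S.Finite) (hne : S.Nonempty) (a : ℝ) :
    ∃ m M : ℝ, a ≤ m ∧ m ≤ M ∧ M < a + 1 ∧ (m : Circle') ∈ S ∧ (M : Circle') ∈ S ∧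
      S ⊆ arcIcc m M := by
  obtain ⟨p, hp, hmin⟩ := S.exists_min_image (lift a) hS hne
  obtain ⟨q, hq, hmax⟩ := S.exists_max_image (lift a) hS hne
  exact ⟨lift a p, lift a q, (lift_mem_Ico a p).1, hmin q hq, (lift_mem_Ico a q).2,
    by rwa [coe_lift], by rwa [coe_lift],
    fun z hz => ⟨lift a z, ⟨hmin z hz, hmax z hz⟩, coe_lift a z⟩⟩

lemma linked_self_of_infinite {S : Set Circle'} (hS : S.Infinite) : Linked S S := by
  have hinj : InjOn (lift 0) S := (LeftInverse.injective (coe_lift 0)).injOn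
  obtain ⟨t, hts, ht⟩ := (hS.image hinj).exists_subset_card_eq 4
  set e := t.orderEmbOfFin ht
  have he : ∀ i, (e i : Circle') ∈ S ∧ e i ∈ Ico (0 : ℝ) 1 := by
    intro i
    obtain ⟨z, hz, hze⟩ := hts (t.orderEmbOfFin_mem ht i)
    rw [← hze, coe_lift]
    exact ⟨hz, by simpa using lift_mem_Ico 0 z⟩
  refine ⟨e 0, e 1, e 2, e 3, ⟨e.strictMono (by decide), e.strictMono (by decide),
    e.strictMono (by decide), by linarith [(he 0).2.1, (he 3).2.2]⟩,
    (he 0).1, (he 2).1, (he 1).1, (he 3).1⟩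

/-- Cut the circle at a point `g₀` of `G`: `F` spans a lift interval `[m, M]` avoiding `g₀`,
and `G` then spans `[lo, hi] ⊆ (M, m + 1)`, since otherwise `m, hi - 1, M, g₀ + 1` would be
interleaved. -/
lemma exists_disjoint_closedArcs {F G : Set Circle'} (hF : F.Finite) (hFne : F.Nonempty)
    (hG : G.Finite) (hGne : G.Nonempty) (hFG : Disjoint F G) (hlink : ¬Linked F G) :
    ∃ I J : Set Circle', IsClosedArc I ∧ IsClosedArc J ∧ Disjoint I J ∧ F ⊆ I ∧ G ⊆ J := by
  obtain ⟨g, hg⟩ := hGne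
  set g₀ := lift 0 g
  have hg₀ : (g₀ : Circle') ∈ G := by rwa [coe_lift]
  obtain ⟨m, M, hg₀m, hmM, hMg₀, hm, hM, hFsub⟩ := exists_lift_bounds hF hFne g₀
  have hg₀m' : g₀ < m := hg₀m.lt_of_ne fun h => hFG.ne_of_mem hm hg₀ (by rw [h])
  obtain ⟨lo, hi, hMlo, hlohi, hhiM, hlo, hhi, hGsub⟩ := exists_lift_bounds hG ⟨g, hg⟩ M
  have hMlo' : M < lo := hMlo.lt_of_ne fun h => hFG.ne_of_mem hM hlo (by rw [h])
  have hhim : hi < m + 1 := by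
    by_contra! h
    have hne : hi ≠ m + 1 := fun h' => hFG.ne_of_mem hm hhi (by rw [h', AddCircle.coe_add_period])
    refine hlink ⟨m, hi - 1, M, g₀ + 1, ⟨by linarith [h.lt_of_ne' hne], by linarith,
      by linarith, by linarith⟩, hm, hM, ?_, by rwa [AddCircle.coe_add_period]⟩
    rwa [← AddCircle.coe_add_period 1 (hi - 1), sub_add_cancel]
  refine ⟨arcIcc m M, arcIcc lo hi, isClosedArc_arcIcc hmM (by linarith),
    isClosedArc_arcIcc hlohi (by linarith),
    (disjoint_arcIcc_arcIoo m M).mono_right (image_mono (Icc_subset_Ioo hMlo' hhim)),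
    hFsub, hGsub⟩

lemma measSupport_eq_support (μ : Measure Circle') : measSupport μ = μ.support := by
  ext p
  simp only [measSupport, Measure.support_eq_forall_isOpen, mem_ofPred_eq, pos_iff_ne_zero]
  exact ⟨fun h U hp hU => h U hU hp, fun h U hU hp => h U hp hU⟩

section Support

variable {X : Type*} [TopologicalSpace X] [MeasurableSpace X] [T1Space X]
  [HereditarilyLindelofSpace X]

lemma measure_singleton_ne_zero_of_mem_support {μ : Measure X} (hfin : μ.support.Finite)
    {p : X} (hp : p ∈ μ.support) : μ {p} ≠ 0 := by
  have hU : IsOpen (μ.support \ {p})ᶜ := (hfin.subset sdiff_subset).isClosed.isOpen_compl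
  have hpos := (Measure.mem_support_iff_forall p).1 hp _ (hU.mem_nhds (by simp))
  intro h0
  refine hpos.ne' (measure_mono_null (fun z hz => ?_) (measure_union_null h0
    (Measure.measure_compl_support (μ := μ))))
  by_cases hzp : z = p
  · exact Or.inl hzp
  · exact Or.inr fun hz' => hz ⟨hz', hzp⟩

lemma disjoint_support_of_prod_diagonal_eq_zero {μ₁ μ₂ : Measure X} [SFinite μ₂]
    (h₁ : μ₁.support.Finite) (h₂ : μ₂.support.Finite) (hdiag : μ₁.prod μ₂ (diagonal X) = 0) :
    Disjoint μ₁.support μ₂.support := by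
  rw [Set.disjoint_left]
  intro p hp₁ hp₂
  have hpp : μ₁.prod μ₂ ({p} ×ˢ {p}) = 0 :=
    measure_mono_null (by simp [singleton_prod_singleton]) hdiag
  rw [Measure.prod_prod] at hpp
  exact mul_ne_zero (measure_singleton_ne_zero_of_mem_support h₁ hp₁)
    (measure_singleton_ne_zero_of_mem_support h₂ hp₂) hpp

end Support

def Squeezes {X : Type*} [TopologicalSpace X] [MeasurableSpace X] (U V : Set X)
    (μ₁ μ₂ : Measure X) : Prop :=
  ∀ ε > 0, ∃ h : X ≃ₜ X, μ₁ (h ⁻¹' Uᶜ) < ε ∧ μ₂ (h ⁻¹' Vᶜ) < ε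

namespace Squeezes

variable {X : Type*} [TopologicalSpace X] [MeasurableSpace X] {U V : Set X}
  {μ₁ μ₂ : Measure X}

lemma prod_diagonal_eq_zero [IsProbabilityMeasure μ₁] [IsProbabilityMeasure μ₂]
    (h : Squeezes U V μ₁ μ₂) (hUV : Disjoint U V) : μ₁.prod μ₂ (diagonal X) = 0 := by
  refine le_antisymm (le_of_forall_gt_imp_ge_of_dense fun ε hε => ?_) zero_le
  obtain ⟨g, h₁, h₂⟩ := h (ε / 2) (ENNReal.half_pos hε.ne')
  have hsub : diagonal X ⊆ (g ⁻¹' Uᶜ) ×ˢ univ ∪ univ ×ˢ (g ⁻¹' Vᶜ) := by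
    rintro ⟨p, q⟩ (rfl : p = q)
    by_cases hp : g p ∈ U
    · exact Or.inr ⟨trivial, hUV.notMem_of_mem_left hp⟩
    · exact Or.inl ⟨hp, trivial⟩
  calc μ₁.prod μ₂ (diagonal X)
      ≤ μ₁.prod μ₂ ((g ⁻¹' Uᶜ) ×ˢ univ) + μ₁.prod μ₂ (univ ×ˢ (g ⁻¹' Vᶜ)) :=
        (measure_mono hsub).trans (measure_union_le _ _)
    _ ≤ ε / 2 + ε / 2 := by
        simp only [Measure.prod_prod, measure_univ, mul_one, one_mul]
        exact add_le_add h₁.le h₂.le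
    _ = ε := ENNReal.add_halves ε

/-- Points of `P₁, P₂, Q₁, Q₂` that some squeezing homeomorphism sends into `U, U, V, V`. -/
lemma exists_not_separates (h : Squeezes U V μ₁ μ₂)
    (hUV : ∀ a ∈ U, ∀ b ∈ U, ∀ c ∈ V, ∀ d ∈ V, ¬Separates {a, b} c d)
    {P₁ P₂ Q₁ Q₂ : Set X} (hP₁ : μ₁ P₁ ≠ 0) (hP₂ : μ₁ P₂ ≠ 0) (hQ₁ : μ₂ Q₁ ≠ 0)
    (hQ₂ : μ₂ Q₂ ≠ 0) :
    ∃ a ∈ P₁, ∃ b ∈ P₂, ∃ c ∈ Q₁, ∃ d ∈ Q₂, ¬Separates {a, b} c d := by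
  obtain ⟨g, hg₁, hg₂⟩ := h (min (min (μ₁ P₁) (μ₁ P₂)) (min (μ₂ Q₁) (μ₂ Q₂)))
    (by simp only [lt_min_iff, pos_iff_ne_zero]; exact ⟨⟨hP₁, hP₂⟩, hQ₁, hQ₂⟩)
  have hmem : ∀ (μ : Measure X) (W P : Set X), μ (g ⁻¹' Wᶜ) < μ P → ∃ p ∈ P, g p ∈ W := by
    intro μ W P hlt
    by_contra! hP
    exact (measure_mono fun p hp => hP p hp).not_gt hlt
  obtain ⟨a, ha, ha'⟩ := hmem μ₁ U P₁ (hg₁.trans_le ((min_le_left _ _).trans (min_le_left _ _)))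
  obtain ⟨b, hb, hb'⟩ := hmem μ₁ U P₂ (hg₁.trans_le ((min_le_left _ _).trans (min_le_right _ _)))
  obtain ⟨c, hc, hc'⟩ := hmem μ₂ V Q₁ (hg₂.trans_le ((min_le_right _ _).trans (min_le_left _ _)))
  obtain ⟨d, hd, hd'⟩ := hmem μ₂ V Q₂ (hg₂.trans_le ((min_le_right _ _).trans (min_le_right _ _)))
  refine ⟨a, ha, b, hb, c, hc, d, hd, fun hs => hUV _ ha' _ hb' _ hc' _ hd' ?_⟩
  simpa [image_pair] using hs.image g

end Squeezes

lemma exists_isOpen_measure_lt (μ : Measure Circle') [IsFiniteMeasure μ] {ε : ℝ≥0∞}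
    (hε : 0 < ε) : ∃ W : Set Circle', IsOpen W ∧ W.Nonempty ∧ μ W < ε := by
  set s : ℕ → Set Circle' := fun k => arcIoo (1 / (k + 2)) (1 / (k + 1))
  have hlt : ∀ k : ℕ, (1 : ℝ) / (k + 2) < 1 / (k + 1) := fun k => by
    gcongr; linarith
  have hdisj : Pairwise (Disjoint on s) := by
    refine (pairwise_disjoint_on s).2 fun m n hmn => Disjoint.symm ?_
    have hmn' : (m : ℝ) + 2 ≤ n + 1 := by exact_mod_cast (by omega : m + 2 ≤ n + 1)
    have h₁ : (1 : ℝ) / (n + 1) ≤ 1 / (m + 2) := by gcongr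
    have h₂ : (1 : ℝ) / (m + 1) ≤ 1 / (n + 2) + 1 := by
      have : (1 : ℝ) / (m + 1) ≤ 1 := by rw [div_le_one (by positivity)]; linarith
      linarith [show (0 : ℝ) < 1 / (n + 2) by positivity]
    exact (disjoint_arcIcc_arcIoo _ _).mono (image_mono Ioo_subset_Icc_self)
      (image_mono (Ioo_subset_Ioo h₁ h₂))
  have hsum : ∑' k, μ (s k) ≠ ∞ :=
    ((tsum_meas_le_meas_iUnion_of_disjoint μ (fun k => (isOpen_arcIoo _ _).measurableSet)
      hdisj).trans_lt (measure_lt_top _ _)).ne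
  obtain ⟨k, hk⟩ := ((ENNReal.tendsto_atTop_zero_of_tsum_ne_top hsum).eventually
    (gt_mem_nhds hε)).exists
  exact ⟨s k, isOpen_arcIoo _ _, (nonempty_Ioo.2 (hlt k)).image _, hk⟩

section Recurrence

variable {Γ α : Type*} [Group Γ] [Countable Γ] [MulAction Γ α] [MeasurableSpace α]
  {μ : Measure α}

lemma ae_exists_smul_mem (hmeas : ∀ γ : Γ, Measurable fun x : α => γ • x)
    (herg : ∀ E : Set α, MeasurableSet E → (∀ γ : Γ, (fun x => γ • x) ⁻¹' E = E) →
      μ E = 0 ∨ μ Eᶜ = 0)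
    {S : Set α} (hS : MeasurableSet S) (hpos : μ S ≠ 0) : ∀ᵐ x ∂μ, ∃ γ : Γ, γ • x ∈ S := by
  set R := ⋃ γ : Γ, (fun x : α => γ • x) ⁻¹' S
  have hinv : ∀ γ : Γ, (fun x => γ • x) ⁻¹' R = R := by
    intro γ
    ext x
    simp only [R, mem_preimage, mem_iUnion, smul_smul]
    exact ⟨fun ⟨g, hg⟩ => ⟨g * γ, hg⟩, fun ⟨g, hg⟩ => ⟨g * γ⁻¹, by simpa using hg⟩⟩
  rcases herg R (.iUnion fun γ => hmeas γ hS) hinv with h | h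
  · exact absurd (measure_mono_null (fun x hx => mem_iUnion.2 ⟨1, by simpa using hx⟩) h) hpos
  · filter_upwards [measure_eq_zero_iff_ae_notMem.1 h] with x hx
    simpa [R] using hx

/-- Quasi-invariance: a null set has null saturation. -/
lemma measure_ne_zero_of_ae_exists_smul_mem [NeZero μ]
    (hmeas : ∀ γ : Γ, Measurable fun x : α => γ • x)
    (hqi : ∀ γ : Γ, Measure.map (fun x => γ • x) μ ≪ μ)
    {T : Set α} (hT : MeasurableSet T) (h : ∀ᵐ x ∂μ, ∃ γ : Γ, γ • x ∈ T) : μ T ≠ 0 := by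
  intro hT0
  have hnot : ∀ᵐ x ∂μ, ∀ γ : Γ, γ • x ∉ T := by
    refine ae_all_iff.2 fun γ => (measure_eq_zero_iff_ae_notMem (s := (γ • ·) ⁻¹' T)).1 ?_
    rw [← Measure.map_apply (hmeas γ) hT]
    exact hqi γ hT0
  have hfalse : ∀ᵐ _ ∂μ, False := (h.and hnot).mono fun x ⟨⟨γ, hγ⟩, hn⟩ => hn γ hγ
  exact NeZero.ne μ (ae_eq_bot.1 (eventually_false_iff_eq_bot.1 hfalse))

end Recurrence

def ChargesBoth {X : Type*} [MeasurableSpace X] (μ : Measure X) (P Q : Set X) : Prop :=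
  μ P ≠ 0 ∧ μ Q ≠ 0

lemma measure_arcIoo_ne_zero {μ : Measure Circle'} {x s t : ℝ} (hx : (x : Circle') ∈ μ.support)
    (hs : s < x) (ht : x < t) : μ (arcIoo s t) ≠ 0 :=
  ((Measure.mem_support_iff_forall _).1 hx _ ((isOpen_arcIoo s t).mem_nhds ⟨x, ⟨hs, ht⟩, rfl⟩)).ne'

lemma exists_rat_cut_of_linked {μ₁ μ₂ : Measure Circle'} (h : Linked μ₁.support μ₂.support) :
    ∃ r₁ r₂ r₃ r₄ : ℚ, ChargesBoth μ₁ (arcIoo (r₄ - 1) r₁) (arcIoo r₂ r₃) ∧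
      ChargesBoth μ₂ (arcIoo r₁ r₂) (arcIoo r₃ r₄) := by
  obtain ⟨a, c, b, d, ⟨hac, hcb, hbd, hda⟩, ha, hb, hc, hd⟩ := h
  obtain ⟨r₁, h₁, h₁'⟩ := exists_rat_btwn hac
  obtain ⟨r₂, h₂, h₂'⟩ := exists_rat_btwn hcb
  obtain ⟨r₃, h₃, h₃'⟩ := exists_rat_btwn hbd
  obtain ⟨r₄, h₄, h₄'⟩ := exists_rat_btwn hda
  exact ⟨r₁, r₂, r₃, r₄,
    ⟨measure_arcIoo_ne_zero ha (by linarith) h₁, measure_arcIoo_ne_zero hb h₂' h₃⟩,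
    ⟨measure_arcIoo_ne_zero hc h₁' h₂, measure_arcIoo_ne_zero hd h₃' h₄⟩⟩

lemma separates_of_mem_cut (r₁ r₂ r₃ r₄ : ℝ) :
    ∀ a ∈ arcIoo (r₄ - 1) r₁, ∀ b ∈ arcIoo r₂ r₃, ∀ c ∈ arcIoo r₁ r₂, ∀ d ∈ arcIoo r₃ r₄,
      Separates {a, b} c d := by
  rintro _ ⟨a, ha, rfl⟩ _ ⟨b, hb, rfl⟩ _ ⟨c, hc, rfl⟩ _ ⟨d, hd, rfl⟩
  exact separates_of_interleaved ⟨by linarith [ha.2, hc.1], by linarith [hc.2, hb.1],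
    by linarith [hb.2, hd.1], by linarith [hd.2, ha.1]⟩

section BoundaryMap

variable {Γ B : Type*} [Group Γ] [Countable Γ] [MulAction Γ B] [MeasurableSpace B]
  {ν : Measure B} {ρ : Γ →* (Circle' ≃ₜ Circle')} {Φ : B → Measure Circle'}

lemma measurableSet_setOf_chargesBoth (hΦmeas : ∀ s, MeasurableSet s → Measurable fun x => Φ x s)
    {P Q : Set Circle'} (hP : MeasurableSet P) (hQ : MeasurableSet Q) :
    MeasurableSet {x | ChargesBoth (Φ x) P Q} :=
  (hΦmeas P hP (measurableSet_singleton 0).compl).inter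
    (hΦmeas Q hQ (measurableSet_singleton 0).compl)

/-- By strong proximality, any `Φ x` is moved almost entirely into `U`: the complement of a
nonempty open set of small mass is squeezed into `interior U`. -/
lemma measure_setOf_measure_compl_lt_ne_zero [NeZero ν] [∀ x, IsFiniteMeasure (Φ x)]
    (hact : ∀ γ : Γ, Measurable fun x : B => γ • x)
    (hqi : ∀ γ : Γ, Measure.map (fun x => γ • x) ν ≪ ν) (hmsp : IsMinimalStronglyProximal ρ)
    (hΦmeas : ∀ s, MeasurableSet s → Measurable fun x => Φ x s)
    (hequiv : ∀ᵐ x ∂ν, ∀ γ : Γ, Φ (γ • x) = Measure.map (ρ γ) (Φ x))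
    {U : Set Circle'} (hU : MeasurableSet U) (hUint : (interior U).Nonempty)
    {ε : ℝ≥0∞} (hε : 0 < ε) : ν {x | Φ x Uᶜ < ε} ≠ 0 := by
  refine measure_ne_zero_of_ae_exists_smul_mem hact hqi
    (measurableSet_lt (hΦmeas _ hU.compl) measurable_const) ?_
  filter_upwards [hequiv] with x hx
  obtain ⟨W, hW, hWne, hWε⟩ := exists_isOpen_measure_lt (Φ x) hε
  obtain ⟨γ, hγ⟩ := hmsp Wᶜ hW.isClosed_compl (compl_ne_univ.2 hWne) _ isOpen_interior hUint
  refine ⟨γ, ?_⟩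
  show Φ (γ • x) Uᶜ < ε
  rw [hx γ, Measure.map_apply (ρ γ).measurable hU.compl]
  refine (measure_mono fun p hp => ?_).trans_lt hWε
  by_contra hpW
  exact hp (interior_subset (hγ ⟨p, hpW, rfl⟩))

lemma ae_squeezes [NeZero ν] [SFinite ν] [∀ x, IsFiniteMeasure (Φ x)]
    (hact : ∀ γ : Γ, Measurable fun x : B => γ • x)
    (hqi : ∀ γ : Γ, Measure.map (fun x => γ • x) ν ≪ ν)
    (herg : ∀ E : Set (B × B), MeasurableSet E → (∀ γ : Γ, (fun p => γ • p) ⁻¹' E = E) →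
      ν.prod ν E = 0 ∨ ν.prod ν Eᶜ = 0)
    (hmsp : IsMinimalStronglyProximal ρ)
    (hΦmeas : ∀ s, MeasurableSet s → Measurable fun x => Φ x s)
    (hequiv : ∀ᵐ x ∂ν, ∀ γ : Γ, Φ (γ • x) = Measure.map (ρ γ) (Φ x))
    {U V : Set Circle'} (hU : MeasurableSet U) (hUint : (interior U).Nonempty)
    (hV : MeasurableSet V) (hVint : (interior V).Nonempty) :
    ∀ᵐ z ∂ν.prod ν, Squeezes U V (Φ z.1) (Φ z.2) := by
  have hrec : ∀ n : ℕ, ∀ᵐ z ∂ν.prod ν, ∃ γ : Γ,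
      γ • z ∈ {x | Φ x Uᶜ < (n : ℝ≥0∞)⁻¹} ×ˢ {x | Φ x Vᶜ < (n : ℝ≥0∞)⁻¹} := by
    intro n
    have hn : 0 < (n : ℝ≥0∞)⁻¹ := ENNReal.inv_pos.2 (ENNReal.natCast_ne_top n)
    refine ae_exists_smul_mem (fun γ => (hact γ).prodMap (hact γ)) herg
      ((measurableSet_lt (hΦmeas _ hU.compl) measurable_const).prod
        (measurableSet_lt (hΦmeas _ hV.compl) measurable_const)) ?_
    rw [Measure.prod_prod]
    exact mul_ne_zero
      (measure_setOf_measure_compl_lt_ne_zero hact hqi hmsp hΦmeas hequiv hU hUint hn)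
      (measure_setOf_measure_compl_lt_ne_zero hact hqi hmsp hΦmeas hequiv hV hVint hn)
  filter_upwards [ae_all_iff.2 hrec, Measure.quasiMeasurePreserving_fst.ae hequiv,
    Measure.quasiMeasurePreserving_snd.ae hequiv] with z hz h₁ h₂ ε hε
  obtain ⟨n, hn⟩ := ENNReal.exists_inv_nat_lt hε.ne'
  obtain ⟨γ, hγ₁, hγ₂⟩ := hz n
  refine ⟨ρ γ, ?_, ?_⟩
  · rw [← Measure.map_apply (ρ γ).measurable hU.compl, ← h₁ γ]
    exact lt_trans hγ₁ hn
  · rw [← Measure.map_apply (ρ γ).measurable hV.compl, ← h₂ γ]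
    exact lt_trans hγ₂ hn

/-- If both sets had positive measure, ergodicity would move a typical pair into their product
while squeezing it, and the squeezing homeomorphism would carry a separating quadruple to a
non-separating one. -/
lemma measure_setOf_chargesBoth_eq_zero_or [SFinite ν]
    (hact : ∀ γ : Γ, Measurable fun x : B => γ • x)
    (herg : ∀ E : Set (B × B), MeasurableSet E → (∀ γ : Γ, (fun p => γ • p) ⁻¹' E = E) →
      ν.prod ν E = 0 ∨ ν.prod ν Eᶜ = 0)
    (hΦmeas : ∀ s, MeasurableSet s → Measurable fun x => Φ x s)
    (hequiv : ∀ᵐ x ∂ν, ∀ γ : Γ, Φ (γ • x) = Measure.map (ρ γ) (Φ x))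
    {U V : Set Circle'} (hsq : ∀ᵐ z ∂ν.prod ν, Squeezes U V (Φ z.1) (Φ z.2))
    (hUV : ∀ a ∈ U, ∀ b ∈ U, ∀ c ∈ V, ∀ d ∈ V, ¬Separates {a, b} c d)
    {P₁ P₂ Q₁ Q₂ : Set Circle'} (hP₁ : MeasurableSet P₁) (hP₂ : MeasurableSet P₂)
    (hQ₁ : MeasurableSet Q₁) (hQ₂ : MeasurableSet Q₂)
    (hsep : ∀ a ∈ P₁, ∀ b ∈ P₂, ∀ c ∈ Q₁, ∀ d ∈ Q₂, Separates {a, b} c d) :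
    ν {x | ChargesBoth (Φ x) P₁ P₂} = 0 ∨ ν {x | ChargesBoth (Φ x) Q₁ Q₂} = 0 := by
  by_contra! hpos
  have hprod : ν.prod ν ({x | ChargesBoth (Φ x) P₁ P₂} ×ˢ {x | ChargesBoth (Φ x) Q₁ Q₂}) ≠ 0 := by
    rw [Measure.prod_prod]
    exact mul_ne_zero hpos.1 hpos.2
  have : (ae (ν.prod ν)).NeBot := ae_neBot.2 fun h => hprod (by simp [h])
  have hpull : ∀ x, (∀ γ : Γ, Φ (γ • x) = Measure.map (ρ γ) (Φ x)) → ∀ (γ : Γ) {P : Set Circle'},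
      MeasurableSet P → Φ (γ • x) P ≠ 0 → Φ x (ρ γ ⁻¹' P) ≠ 0 := by
    intro x hx γ P hP h
    rwa [hx γ, Measure.map_apply (ρ γ).measurable hP] at h
  have hrec := ae_exists_smul_mem (fun γ => (hact γ).prodMap (hact γ)) herg
    ((measurableSet_setOf_chargesBoth hΦmeas hP₁ hP₂).prod
      (measurableSet_setOf_chargesBoth hΦmeas hQ₁ hQ₂)) hprod
  obtain ⟨z, ⟨γ, ⟨hP₁', hP₂'⟩, hQ₁', hQ₂'⟩, hz, h₁, h₂⟩ := (hrec.and (hsq.and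
    ((Measure.quasiMeasurePreserving_fst.ae hequiv).and
      (Measure.quasiMeasurePreserving_snd.ae hequiv)))).exists
  obtain ⟨a, ha, b, hb, c, hc, d, hd, hns⟩ := hz.exists_not_separates hUV
    (hpull _ h₁ γ hP₁ hP₁') (hpull _ h₁ γ hP₂ hP₂') (hpull _ h₂ γ hQ₁ hQ₁') (hpull _ h₂ γ hQ₂ hQ₂')
  apply hns
  simpa [image_pair] using (hsep _ ha _ hb _ hc _ hd).image (ρ γ).symm

/-- When `r₁ < r₂ < r₃ < r₄ < r₁ + 1`, the arcs `(r₄ - 1, r₁), (r₂, r₃)` alternate with the arcs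
`(r₁, r₂), (r₃, r₄)` around the circle. -/
def RationalCutsNull (ν : Measure B) (Φ : B → Measure Circle') : Prop :=
  ∀ r₁ r₂ r₃ r₄ : ℚ, ν {x | ChargesBoth (Φ x) (arcIoo (r₄ - 1) r₁) (arcIoo r₂ r₃)} = 0 ∨
    ν {x | ChargesBoth (Φ x) (arcIoo r₁ r₂) (arcIoo r₃ r₄)} = 0

lemma ae_not_linked_self (hcut : RationalCutsNull ν Φ) :
    ∀ᵐ x ∂ν, ¬Linked (Φ x).support (Φ x).support := by
  have h : ∀ᵐ x ∂ν, ∀ r₁ r₂ r₃ r₄ : ℚ,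
      ¬(ChargesBoth (Φ x) (arcIoo (r₄ - 1) r₁) (arcIoo r₂ r₃) ∧
        ChargesBoth (Φ x) (arcIoo r₁ r₂) (arcIoo r₃ r₄)) := by
    simp only [ae_all_iff]
    intro r₁ r₂ r₃ r₄
    refine ae_iff.2 ?_
    simp only [not_not]
    rcases hcut r₁ r₂ r₃ r₄ with h | h
    exacts [measure_mono_null (fun x hx => hx.1) h, measure_mono_null (fun x hx => hx.2) h]
  filter_upwards [h] with x hx hlink
  obtain ⟨r₁, r₂, r₃, r₄, h₁, h₂⟩ := exists_rat_cut_of_linked hlink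
  exact hx r₁ r₂ r₃ r₄ ⟨h₁, h₂⟩

lemma ae_not_linked_prod [SFinite ν]
    (hcut : RationalCutsNull ν Φ) :
    ∀ᵐ z ∂ν.prod ν, ¬Linked (Φ z.1).support (Φ z.2).support := by
  have h : ∀ᵐ z ∂ν.prod ν, ∀ r₁ r₂ r₃ r₄ : ℚ,
      z ∉ {x | ChargesBoth (Φ x) (arcIoo (r₄ - 1) r₁) (arcIoo r₂ r₃)} ×ˢ
        {x | ChargesBoth (Φ x) (arcIoo r₁ r₂) (arcIoo r₃ r₄)} := by
    simp only [ae_all_iff]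
    intro r₁ r₂ r₃ r₄
    refine measure_eq_zero_iff_ae_notMem.1 ?_
    rw [Measure.prod_prod]
    rcases hcut r₁ r₂ r₃ r₄ with h | h <;> simp [h]
  filter_upwards [h] with z hz hlink
  obtain ⟨r₁, r₂, r₃, r₄, h₁, h₂⟩ := exists_rat_cut_of_linked hlink
  exact hz r₁ r₂ r₃ r₄ ⟨h₁, h₂⟩

end BoundaryMap

end CircleBoundary

open CircleBoundary

theorem statement9_general {Γ B : Type*} [Group Γ] [Countable Γ]
    [MeasurableSpace B] [MulAction Γ B]
    (ν : Measure B) [IsProbabilityMeasure ν]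
    (hact : ∀ γ : Γ, Measurable fun x : B => γ • x)
    (hqi : ∀ γ : Γ, Measure.map (fun x : B => γ • x) ν ≪ ν ∧
      ν ≪ Measure.map (fun x : B => γ • x) ν)
    (herg : ∀ E : Set (B × B), MeasurableSet E →
      (∀ γ : Γ, (fun p : B × B => (γ • p.1, γ • p.2)) ⁻¹' E = E) →
      (ν.prod ν) E = 0 ∨ (ν.prod ν) Eᶜ = 0)
    (ρ : Γ →* (Circle' ≃ₜ Circle'))
    (hmsp : IsMinimalStronglyProximal ρ)
    (Φ : B → Measure Circle')
    (hΦprob : ∀ x : B, IsProbabilityMeasure (Φ x))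
    (hΦmeas : ∀ s : Set Circle', MeasurableSet s → Measurable fun x : B => Φ x s)
    (hΦequiv : ∀ γ : Γ, ∀ᵐ x ∂ν, Φ (γ • x) = Measure.map (ρ γ) (Φ x)) :
    ∀ᵐ z ∂(ν.prod ν),
      (measSupport (Φ (Prod.fst z))).Finite ∧ (measSupport (Φ (Prod.snd z))).Finite ∧
      ∃ I J : Set Circle', IsClosedArc I ∧ IsClosedArc J ∧ Disjoint I J ∧
        measSupport (Φ (Prod.fst z)) ⊆ I ∧ measSupport (Φ (Prod.snd z)) ⊆ J := by
  have hequiv : ∀ᵐ x ∂ν, ∀ γ : Γ, Φ (γ • x) = Measure.map (ρ γ) (Φ x) := ae_all_iff.2 hΦequiv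
  have hsq : ∀ᵐ z ∂ν.prod ν,
      Squeezes (arcIcc 0 (1 / 4)) (arcIcc (1 / 2) (3 / 4)) (Φ z.1) (Φ z.2) :=
    ae_squeezes hact (fun γ => (hqi γ).1) herg hmsp hΦmeas hequiv
      (isClosed_arcIcc _ _).measurableSet (nonempty_interior_arcIcc (by norm_num))
      (isClosed_arcIcc _ _).measurableSet (nonempty_interior_arcIcc (by norm_num))
  have hcut : RationalCutsNull ν Φ := fun r₁ r₂ r₃ r₄ =>
    measure_setOf_chargesBoth_eq_zero_or hact herg hΦmeas hequiv hsq
      (not_separates_of_mem_arcIcc (by norm_num) (by norm_num))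
      (isOpen_arcIoo _ _).measurableSet (isOpen_arcIoo _ _).measurableSet
      (isOpen_arcIoo _ _).measurableSet (isOpen_arcIoo _ _).measurableSet
      (separates_of_mem_cut _ _ _ _)
  have hself := ae_not_linked_self hcut
  filter_upwards [Measure.quasiMeasurePreserving_fst.ae hself,
    Measure.quasiMeasurePreserving_snd.ae hself, ae_not_linked_prod hcut, hsq]
    with z h₁ h₂ h₁₂ hz
  simp only [measSupport_eq_support]
  have hfin₁ := not_infinite.1 (mt linked_self_of_infinite h₁)
  have hfin₂ := not_infinite.1 (mt linked_self_of_infinite h₂)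
  have hdisj := disjoint_support_of_prod_diagonal_eq_zero hfin₁ hfin₂
    (hz.prod_diagonal_eq_zero ((disjoint_arcIcc_arcIoo 0 (1 / 4)).mono_right
      (image_mono (Icc_subset_Ioo (by norm_num) (by norm_num)))))
  exact ⟨hfin₁, hfin₂, exists_disjoint_closedArcs
    hfin₁ (Measure.nonempty_support (IsProbabilityMeasure.ne_zero _))
    hfin₂ (Measure.nonempty_support (IsProbabilityMeasure.ne_zero _)) hdisj h₁₂⟩

/-- For a boundary map `Φ : B → Prob(S¹)` associated with a minimal strongly proximal circle
action of a countable group and a doubly ergodic quasi-invariant `Γ`-space `(B, ν)`, for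
almost every pair `(x, y)` the supports of `Φ(x)` and `Φ(y)` are finite and unlinked: they lie
in two disjoint closed arcs. -/
theorem statement9 {Γ B : Type*} [Group Γ] [Countable Γ]
    [MeasurableSpace B] [StandardBorelSpace B] [MulAction Γ B]
    (ν : Measure B) [IsProbabilityMeasure ν]
    (hact : ∀ γ : Γ, Measurable fun x : B => γ • x)
    (hqi : ∀ γ : Γ, Measure.map (fun x : B => γ • x) ν ≪ ν ∧
      ν ≪ Measure.map (fun x : B => γ • x) ν)
    (herg : ∀ E : Set (B × B), MeasurableSet E →
      (∀ γ : Γ, (fun p : B × B => (γ • p.1, γ • p.2)) ⁻¹' E = E) →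
      (ν.prod ν) E = 0 ∨ (ν.prod ν) Eᶜ = 0)
    (ρ : Γ →* (Circle' ≃ₜ Circle'))
    (hmsp : IsMinimalStronglyProximal ρ)
    (Φ : B → Measure Circle')
    (hΦprob : ∀ x : B, IsProbabilityMeasure (Φ x))
    (hΦmeas : ∀ s : Set Circle', MeasurableSet s → Measurable fun x : B => Φ x s)
    (hΦequiv : ∀ γ : Γ, ∀ᵐ x ∂ν, Φ (γ • x) = Measure.map (ρ γ) (Φ x)) :
    ∀ᵐ z ∂(ν.prod ν),
      (measSupport (Φ (Prod.fst z))).Finite ∧ (measSupport (Φ (Prod.snd z))).Finite ∧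
      ∃ I J : Set Circle', IsClosedArc I ∧ IsClosedArc J ∧ Disjoint I J ∧
        measSupport (Φ (Prod.fst z)) ⊆ I ∧ measSupport (Φ (Prod.snd z)) ⊆ J :=
  statement9_general ν hact hqi herg ρ hmsp Φ hΦprob hΦmeas hΦequiv
end
end

section
/- Fix an integer k ≥ 3. Let 𝒜 be a family of k-element subsets of the circle S¹ that are pairwise unlinked: any two distinct members A, A' ∈ 𝒜 are contained in two disjoint closed arcs of S¹. Then 𝒜 is at most countable. More precisely, for every ε > 0, the subfamily 𝒜_ε of those A ∈ 𝒜 whose separation sep(A) = min{ d(a,a') : a ≠ a' ∈ A } is at least ε has cardinality at most (k−2)/ε, where d is the standard arc-length metric on S¹ = ℝ/ℤ normalized so that the total length of S¹ is 1. -/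
noncomputable section

open MeasureTheory Set Function
open scoped ENNReal

/-!
Lift every point of the circle to its representative in `[0, 1)`. Sets lying in disjoint closed
arcs then cannot interleave as sets of reals: if `a < b < a' < b'`, the points `b, b'` cut the
circle into two open arcs separating `a` from `a'`, so a connected set containing `a, a'` meets
`{b, b'}`. Circle distances are also at most the distances of the lifts.

Now take `n` pairwise disjoint, non-interleaving, `ε`-separated `k`-point subsets of `[lo, hi]` and
a member `A` of least hull length. A member with a point in the hull of `A` would, by
non-interleaving, lie strictly inside it and have a shorter hull, so no other member meets it. Collapsing the hull
(of length at least `(k - 1) ε`) to length `ε` keeps the other members disjoint, non-interleaving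
and `ε`-separated, so by induction `n (k - 2) ε ≤ hi - lo`. On the circle this gives
`n ε ≤ 1 ≤ k - 2` for `k ≥ 3`, and countability follows because every finite set is
`1/(m+1)`-separated for some `m`.
-/

def Separated {X : Type*} [PseudoMetricSpace X] (ε : ℝ) (A : Finset X) : Prop :=
  ∀ a ∈ A, ∀ a' ∈ A, a ≠ a' → ε ≤ dist a a'

lemma Separated.anti {X : Type*} [PseudoMetricSpace X] {ε δ : ℝ} {A : Finset X} (h : Separated δ A)
    (hεδ : ε ≤ δ) : Separated ε A :=
  fun a ha a' ha' hne => hεδ.trans (h a ha a' ha' hne)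

lemma Finset.exists_pos_separated {X : Type*} [MetricSpace X] (A : Finset X) :
    ∃ ε > 0, Separated ε A := by
  rcases A.offDiag.eq_empty_or_nonempty with h | h
  · refine ⟨1, one_pos, fun a ha a' ha' hne => ?_⟩
    simpa [h] using (Finset.mem_offDiag (x := (a, a'))).2 ⟨ha, ha', hne⟩
  · obtain ⟨p, hp, hmin⟩ := A.offDiag.exists_min_image (fun p => dist p.1 p.2) h
    exact ⟨dist p.1 p.2, dist_pos.2 (Finset.mem_offDiag.1 hp).2.2,
      fun a ha a' ha' hne =>
        hmin (a, a') (Finset.mem_offDiag.2 ⟨ha, ha', hne⟩ : (a, a') ∈ A.offDiag)⟩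

lemma Set.finite_of_forall_finset_card_le {α : Type*} {s : Set α} (n : ℕ)
    (h : ∀ t : Finset α, ↑t ⊆ s → t.card ≤ n) : s.Finite := by
  by_contra hs
  obtain ⟨t, hts, ht⟩ := Set.Infinite.exists_subset_card_eq hs (n + 1)
  have := h t hts
  omega

def Interleaved (s t : Finset ℝ) : Prop :=
  ∃ a ∈ s, ∃ b ∈ t, ∃ a' ∈ s, ∃ b' ∈ t, a < b ∧ b < a' ∧ a' < b'

lemma subset_Ioo_of_not_interleaved {s t : Finset ℝ} (hst : Disjoint s t)
    (h₁ : ¬ Interleaved s t) (h₂ : ¬ Interleaved t s) {a a' b : ℝ} (ha : a ∈ s) (ha' : a' ∈ s)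
    (hb : b ∈ t) (hab : a < b) (hba' : b < a') : ∀ x ∈ t, x ∈ Ioo a a' := by
  intro x hx
  have hxa : x ≠ a := fun h => Finset.disjoint_left.1 hst ha (h ▸ hx)
  have hxa' : x ≠ a' := fun h => Finset.disjoint_left.1 hst ha' (h ▸ hx)
  constructor
  · by_contra! h
    exact h₂ ⟨x, hx, a, ha, b, hb, a', ha', lt_of_le_of_ne h hxa, hab, hba'⟩
  · by_contra! h
    exact h₁ ⟨a, ha, b, hb, a', ha', x, hx, hab, hba', lt_of_le_of_ne h (Ne.symm hxa')⟩

lemma card_sub_one_mul_le {ε lo hi : ℝ} {s : Finset ℝ} (hs : s.Nonempty)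
    (hsep : ∀ x ∈ s, ∀ y ∈ s, x < y → x + ε ≤ y) (hmem : ∀ x ∈ s, x ∈ Icc lo hi) :
    ((s.card : ℝ) - 1) * ε ≤ hi - lo := by
  induction s using Finset.induction_on_max generalizing hi with
  | empty => simp at hs
  | insert a s hlt ih =>
    have ha := hmem a (Finset.mem_insert_self a s)
    rw [Finset.card_insert_of_notMem fun h => (hlt a h).false]
    rcases s.eq_empty_or_nonempty with rfl | hne
    · simpa using ha.1.trans ha.2
    · have hmem' : ∀ x ∈ s, x ∈ Icc lo (hi - ε) := fun x hx => by
        have := hsep x (Finset.mem_insert_of_mem hx) a (Finset.mem_insert_self a s) (hlt x hx)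
        exact ⟨(hmem x (Finset.mem_insert_of_mem hx)).1, by linarith [ha.2]⟩
      have := ih hne (fun x hx y hy => hsep x (Finset.mem_insert_of_mem hx) y
        (Finset.mem_insert_of_mem hy)) hmem'
      push_cast
      linarith

def collapse (m M ε x : ℝ) : ℝ := if x < m then x else x - (M - m - ε)

section collapse

variable {m M ε : ℝ}

lemma strictMonoOn_collapse (hε : 0 ≤ ε) : StrictMonoOn (collapse m M ε) (Icc m M)ᶜ := by
  intro x hx y hy hxy
  simp only [mem_compl_iff, mem_Icc, not_and_or, not_le] at hx hy
  unfold collapse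
  split_ifs <;> grind

lemma collapse_add_le (hε : 0 ≤ ε) {x y : ℝ} (hy : y ∈ (Icc m M)ᶜ) (hxy : x + ε ≤ y) :
    collapse m M ε x + ε ≤ collapse m M ε y := by
  simp only [mem_compl_iff, mem_Icc, not_and_or, not_le] at hy
  unfold collapse
  split_ifs <;> grind

lemma collapse_mem_Icc (hε : 0 ≤ ε) {lo hi x : ℝ} (hlo : lo ≤ m) (hhi : M ≤ hi)
    (hx : x ∈ (Icc m M)ᶜ ∩ Icc lo hi) :
    collapse m M ε x ∈ Icc lo (hi - (M - m - ε)) := by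
  obtain ⟨hx, hxlo, hxhi⟩ := hx
  simp only [mem_compl_iff, mem_Icc, not_and_or, not_le] at hx
  unfold collapse
  constructor <;> split_ifs <;> grind

end collapse

def hullLength (s : Finset ℝ) : ℝ := sSup (s : Set ℝ) - sInf (s : Set ℝ)

structure IsUnlinkedPacking {ι : Type*} (I : Finset ι) (s : ι → Finset ℝ) (k : ℕ)
    (ε lo hi : ℝ) : Prop where
  card_eq : ∀ i ∈ I, (s i).card = k
  separated : ∀ i ∈ I, ∀ x ∈ s i, ∀ y ∈ s i, x < y → x + ε ≤ y
  mem_Icc : ∀ i ∈ I, ∀ x ∈ s i, x ∈ Icc lo hi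
  disjoint : ∀ i ∈ I, ∀ j ∈ I, i ≠ j → Disjoint (s i) (s j)
  not_interleaved : ∀ i ∈ I, ∀ j ∈ I, i ≠ j → ¬ Interleaved (s i) (s j)

namespace IsUnlinkedPacking

variable {ι : Type*} {I J : Finset ι} {s : ι → Finset ℝ} {k : ℕ} {ε lo hi : ℝ}

lemma mono (h : IsUnlinkedPacking I s k ε lo hi) (hJ : J ⊆ I) :
    IsUnlinkedPacking J s k ε lo hi where
  card_eq i hi := h.card_eq i (hJ hi)
  separated i hi := h.separated i (hJ hi)
  mem_Icc i hi := h.mem_Icc i (hJ hi)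
  disjoint i hi j hj := h.disjoint i (hJ hi) j (hJ hj)
  not_interleaved i hi j hj := h.not_interleaved i (hJ hi) j (hJ hj)

lemma image (h : IsUnlinkedPacking I s k ε lo hi) {S : Set ℝ} {f : ℝ → ℝ} {lo' hi' : ℝ}
    (hS : ∀ i ∈ I, ∀ x ∈ s i, x ∈ S) (hf : StrictMonoOn f S)
    (hgap : ∀ x ∈ S, ∀ y ∈ S, x + ε ≤ y → f x + ε ≤ f y)
    (hmaps : ∀ x ∈ S ∩ Icc lo hi, f x ∈ Icc lo' hi') :
    IsUnlinkedPacking I (fun i => (s i).image f) k ε lo' hi' where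
  card_eq i hi := by
    rw [Finset.card_image_of_injOn (hf.injOn.mono fun x hx => hS i hi x hx), h.card_eq i hi]
  separated i hi := by
    simp only [Finset.mem_image]
    rintro _ ⟨x, hx, rfl⟩ _ ⟨y, hy, rfl⟩ hxy
    exact hgap x (hS i hi x hx) y (hS i hi y hy) (h.separated i hi x hx y hy
      ((hf.lt_iff_lt (hS i hi x hx) (hS i hi y hy)).1 hxy))
  mem_Icc i hi := by
    simp only [Finset.mem_image]
    rintro _ ⟨x, hx, rfl⟩
    exact hmaps x ⟨hS i hi x hx, h.mem_Icc i hi x hx⟩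
  disjoint i hi j hj hij := by
    simp only [Finset.disjoint_left, Finset.mem_image]
    rintro _ ⟨x, hx, rfl⟩ ⟨y, hy, hyx⟩
    rw [hf.injOn (hS j hj y hy) (hS i hi x hx) hyx] at hy
    exact Finset.disjoint_left.1 (h.disjoint i hi j hj hij) hx hy
  not_interleaved i hi j hj hij := by
    simp only [Interleaved, Finset.mem_image]
    rintro ⟨_, ⟨a, ha, rfl⟩, _, ⟨b, hb, rfl⟩, _, ⟨a', ha', rfl⟩, _, ⟨b', hb', rfl⟩, h₁, h₂, h₃⟩
    have hlt := fun {x y} (hx : x ∈ S) (hy : y ∈ S) => (hf.lt_iff_lt hx hy).1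
    exact h.not_interleaved i hi j hj hij ⟨a, ha, b, hb, a', ha', b', hb',
      hlt (hS i hi a ha) (hS j hj b hb) h₁, hlt (hS j hj b hb) (hS i hi a' ha') h₂,
      hlt (hS i hi a' ha') (hS j hj b' hb') h₃⟩

lemma notMem_Icc_of_hullLength_le (h : IsUnlinkedPacking I s k ε lo hi) {a j : ι} (ha : a ∈ I)
    (hj : j ∈ I) (hja : j ≠ a) (hne : (s a).Nonempty)
    (hlen : hullLength (s a) ≤ hullLength (s j)) :
    ∀ x ∈ s j, x ∉ Icc (sInf (s a : Set ℝ)) (sSup (s a : Set ℝ)) := by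
  intro x hx ⟨hmx, hxM⟩
  have hdisj := h.disjoint a ha j hj hja.symm
  have hm := hne.csInf_mem
  have hM := hne.csSup_mem
  have hIoo := subset_Ioo_of_not_interleaved hdisj (h.not_interleaved a ha j hj hja.symm)
    (h.not_interleaved j hj a ha hja) hm hM hx
    (lt_of_le_of_ne hmx fun h => Finset.disjoint_left.1 hdisj hm (h ▸ hx))
    (lt_of_le_of_ne hxM fun h => Finset.disjoint_left.1 hdisj hM (h ▸ hx))
  have hjne : (s j).Nonempty := ⟨x, hx⟩
  unfold hullLength at hlen
  linarith [(hIoo _ hjne.csInf_mem).1, (hIoo _ hjne.csSup_mem).2]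

theorem card_mul_le (h : IsUnlinkedPacking I s k ε lo hi) (hε : 0 ≤ ε)
    (hlohi : lo ≤ hi) :
    I.card * ((k - 2) * ε) ≤ hi - lo := by
  classical
  induction I using Finset.strongInduction generalizing s hi with
  | H I ih =>
  rcases I.eq_empty_or_nonempty with rfl | hI
  · simpa using hlohi
  rcases Nat.eq_zero_or_pos k with rfl | hk
  · have : (0 : ℝ) ≤ I.card := I.card.cast_nonneg
    push_cast
    nlinarith
  obtain ⟨a, ha, hmin⟩ := I.exists_min_image (fun i => hullLength (s i)) hI
  have hne : (s a).Nonempty := Finset.card_pos.1 (h.card_eq a ha ▸ hk)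
  set m := sInf (s a : Set ℝ)
  set M := sSup (s a : Set ℝ)
  have hspan : ((k : ℝ) - 1) * ε ≤ M - m := by
    have := card_sub_one_mul_le hne (h.separated a ha) fun x hx =>
      ⟨csInf_le (Finset.bddBelow _) hx, le_csSup (Finset.bddAbove _) hx⟩
    rwa [h.card_eq a ha] at this
  have hlo : lo ≤ m := (h.mem_Icc a ha m hne.csInf_mem).1
  have hhi : M ≤ hi := (h.mem_Icc a ha M hne.csSup_mem).2
  have hrest := (h.mono (Finset.erase_subset a I)).image (S := (Icc m M)ᶜ)
    (fun j hj => h.notMem_Icc_of_hullLength_le ha (Finset.mem_of_mem_erase hj)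
      (Finset.ne_of_mem_erase hj) hne (hmin j (Finset.mem_of_mem_erase hj)))
    (strictMonoOn_collapse hε) (fun x _ y hy => collapse_add_le hε hy)
    (fun x hx => collapse_mem_Icc hε hlo hhi hx)
  have := ih _ (Finset.erase_ssubset ha) hrest (by linarith [hne.csInf_mem])
  rw [Finset.card_erase_of_mem ha, Nat.cast_pred (Finset.card_pos.2 hI)] at this
  linarith

end IsUnlinkedPacking

lemma dist_coe_le_abs_sub (x y : ℝ) : dist (x : Circle') y ≤ |x - y| := by
  rw [dist_eq_norm, ← AddCircle.coe_sub, UnitAddCircle.norm_eq]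
  simpa using round_le (x - y) 0

def toIco (z : Circle') : ℝ := AddCircle.equivIco 1 0 z

lemma toIco_mem_Ico (z : Circle') : toIco z ∈ Ico 0 1 := by
  simpa [toIco] using (AddCircle.equivIco 1 0 z).2

@[simp] lemma coe_toIco (z : Circle') : (toIco z : Circle') = z := AddCircle.coe_equivIco

lemma toIco_injective : Injective toIco :=
  fun z w h => by rw [← coe_toIco z, ← coe_toIco w, h]

lemma IsPreconnected.coe_mem_or_coe_mem {I : Set Circle'} (hI : IsPreconnected I)
    {u₁ v₁ u₂ v₂ : ℝ} (h₁ : u₁ < v₁) (h₂ : v₁ < u₂) (h₃ : u₂ < v₂) (h₄ : v₂ < u₁ + 1)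
    (hu₁ : (u₁ : Circle') ∈ I) (hu₂ : (u₂ : Circle') ∈ I) :
    (v₁ : Circle') ∈ I ∨ (v₂ : Circle') ∈ I := by
  by_contra! hv
  set U : Set Circle' := (↑) '' Ioo v₁ v₂
  set V : Set Circle' := (↑) '' Ioo v₂ (v₁ + 1)
  have hUV : Disjoint U V := by
    simp only [U, V, Set.disjoint_left, mem_image, not_exists, not_and]
    rintro _ ⟨x, hx, rfl⟩ y hy hyx
    have := (AddCircle.coe_eq_coe_iff_of_mem_Ico (a := v₁)
      ⟨by linarith [hy.1], by linarith [hy.2]⟩ ⟨hx.1.le, by linarith [hx.2]⟩).1 hyx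
    linarith [hx.2, hy.1]
  have hcover : I ⊆ U ∪ V := by
    intro z hz
    obtain ⟨⟨r, hr⟩, rfl⟩ := (AddCircle.equivIco 1 v₁).symm.surjective z
    have hr₁ : r ≠ v₁ := by rintro rfl; exact hv.1 hz
    have hr₂ : r ≠ v₂ := by rintro rfl; exact hv.2 hz
    rcases lt_or_gt_of_ne hr₂ with h | h
    · exact Or.inl ⟨r, ⟨lt_of_le_of_ne hr.1 hr₁.symm, h⟩, rfl⟩
    · exact Or.inr ⟨r, ⟨h, hr.2⟩, rfl⟩
  have hu₂U : (u₂ : Circle') ∈ U := ⟨u₂, ⟨h₂, h₃⟩, rfl⟩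
  have hu₁V : (u₁ : Circle') ∈ V := ⟨u₁ + 1, ⟨h₄, by linarith⟩, AddCircle.coe_add_period 1 u₁⟩
  rcases hI.subset_or_subset (QuotientAddGroup.isOpenMap_coe _ isOpen_Ioo)
    (QuotientAddGroup.isOpenMap_coe _ isOpen_Ioo) hUV hcover with hIU | hIV
  · exact Set.disjoint_left.1 hUV (hIU hu₁) hu₁V
  · exact Set.disjoint_left.1 hUV hu₂U (hIV hu₂)

def Unlinked (A B : Finset Circle') : Prop :=
  ∃ I J : Set Circle', IsClosedArc I ∧ IsClosedArc J ∧ Disjoint I J ∧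
    (A : Set Circle') ⊆ I ∧ (B : Set Circle') ⊆ J

lemma Unlinked.disjoint_image_toIco {A B : Finset Circle'} (h : Unlinked A B) :
    Disjoint (A.image toIco) (B.image toIco) := by
  obtain ⟨I, J, -, -, hIJ, hA, hB⟩ := h
  rw [Finset.disjoint_image toIco_injective, ← Finset.disjoint_coe]
  exact hIJ.mono hA hB

lemma Unlinked.not_interleaved_image_toIco {A B : Finset Circle'} (h : Unlinked A B) :
    ¬ Interleaved (A.image toIco) (B.image toIco) := by
  obtain ⟨I, J, ⟨-, -, hI, -⟩, -, hIJ, hA, hB⟩ := h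
  simp only [Interleaved, Finset.mem_image]
  rintro ⟨_, ⟨a, ha, rfl⟩, _, ⟨b, hb, rfl⟩, _, ⟨a', ha', rfl⟩, _, ⟨b', hb', rfl⟩, h₁, h₂, h₃⟩
  have h₄ : toIco b' < toIco a + 1 := by linarith [(toIco_mem_Ico b').2, (toIco_mem_Ico a).1]
  have := hI.coe_mem_or_coe_mem h₁ h₂ h₃ h₄ (by simpa using hA ha) (by simpa using hA ha')
  simp only [coe_toIco] at this
  rcases this with hbI | hbI
  · exact Set.disjoint_left.1 hIJ hbI (hB hb)
  · exact Set.disjoint_left.1 hIJ hbI (hB hb')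

lemma isUnlinkedPacking_image_toIco {k : ℕ} {ε : ℝ} (F : Finset (Finset Circle'))
    (hcard : ∀ A ∈ F, A.card = k) (hsep : ∀ A ∈ F, Separated ε A)
    (hunlinked : ∀ A ∈ F, ∀ B ∈ F, A ≠ B → Unlinked A B) :
    IsUnlinkedPacking F (fun A => A.image toIco) k ε 0 1 where
  card_eq A hA := by rw [Finset.card_image_of_injective _ toIco_injective, hcard A hA]
  separated A hA := by
    simp only [Finset.mem_image]
    rintro _ ⟨a, ha, rfl⟩ _ ⟨b, hb, rfl⟩ hab
    have := (hsep A hA a ha b hb (by rintro rfl; exact hab.false)).trans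
      (by simpa using dist_coe_le_abs_sub (toIco a) (toIco b))
    rw [abs_sub_comm, abs_of_pos (sub_pos.2 hab)] at this
    linarith
  mem_Icc A _ := by
    simp only [Finset.mem_image]
    rintro _ ⟨a, -, rfl⟩
    exact Ico_subset_Icc_self (toIco_mem_Ico a)
  disjoint A hA B hB hAB := (hunlinked A hA B hB hAB).disjoint_image_toIco
  not_interleaved A hA B hB hAB := (hunlinked A hA B hB hAB).not_interleaved_image_toIco

/-- A family of pairwise unlinked `k`-point subsets of the circle (`k ≥ 3`) is at most
countable; more precisely, the subfamily of sets with separation at least `ε` has at most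
`(k−2)/ε` elements. -/
theorem statement10 (k : ℕ) (hk : 3 ≤ k) (𝒜 : Set (Finset Circle'))
    (hcard : ∀ A ∈ 𝒜, A.card = k)
    (hunlinked : ∀ A ∈ 𝒜, ∀ A' ∈ 𝒜, A ≠ A' →
      ∃ I J : Set Circle', IsClosedArc I ∧ IsClosedArc J ∧ Disjoint I J ∧
        (A : Set Circle') ⊆ I ∧ (A' : Set Circle') ⊆ J) :
    𝒜.Countable ∧
      ∀ ε : ℝ, 0 < ε →
        ({A ∈ 𝒜 | ∀ a ∈ A, ∀ a' ∈ A, a ≠ a' → ε ≤ dist a a'}).Finite ∧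
        (Nat.card ({A ∈ 𝒜 | ∀ a ∈ A, ∀ a' ∈ A, a ≠ a' → ε ≤ dist a a'}) : ℝ) ≤
          ((k : ℝ) - 2) / ε := by
  have hbound : ∀ ε > 0, ∀ F : Finset (Finset Circle'), ↑F ⊆ {A ∈ 𝒜 | Separated ε A} →
      (F.card : ℝ) ≤ (k - 2) / ε := by
    intro ε hε F hF
    have := (isUnlinkedPacking_image_toIco F (fun A hA => hcard A (hF hA).1) (fun A hA => (hF hA).2)
      fun A hA B hB => hunlinked A (hF hA).1 B (hF hB).1).card_mul_le hε.le zero_le_one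
    have hk' : (1 : ℝ) ≤ k - 2 := by
      have : (3 : ℝ) ≤ k := by exact_mod_cast hk
      linarith
    rw [le_div_iff₀ hε]
    nlinarith [F.card.cast_nonneg (α := ℝ)]
  have hfinite : ∀ ε > 0, {A ∈ 𝒜 | Separated ε A}.Finite := fun ε hε =>
    Set.finite_of_forall_finset_card_le _ fun F hF => Nat.le_floor (hbound ε hε F hF)
  refine ⟨?_, fun ε hε => ⟨hfinite ε hε, ?_⟩⟩
  · have hcover : 𝒜 ⊆ ⋃ n : ℕ, {A ∈ 𝒜 | Separated (1 / (n + 1)) A} := fun A hA => by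
      obtain ⟨δ, hδ, hsep⟩ := A.exists_pos_separated
      obtain ⟨n, hn⟩ := exists_nat_one_div_lt hδ
      exact mem_iUnion.2 ⟨n, hA, hsep.anti hn.le⟩
    exact (countable_iUnion fun n => (hfinite _ Nat.one_div_pos_of_nat).countable).mono hcover
  · have := hbound ε hε (hfinite ε hε).toFinset (by simp)
    rwa [← Nat.card_eq_card_finite_toFinset] at this
end
end

section
/- Let Γ be a group, ρ : Γ → Homeo(S¹) an action by homeomorphisms of the circle which is minimal and strongly proximal, and (B, ν) a standard probability space with a measurable quasi-invariant Γ-action. Let k ≥ 1 and let x ↦ A_x be a measurable Γ-equivariant map assigning to ν-a.e. x ∈ B a k-element subset A_x ⊆ S¹. Then for every nonempty open set U ⊆ S¹, the set { x ∈ B : A_x ⊆ U } has positive ν-measure. -/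
/-!
Suppose `ν {x | A_x ⊆ U} = 0`. For a nonempty open `V`, strong proximality moves the proper
closed set `Vᶜ` into `U` by some `γ`; by equivariance `A_x ⊆ Vᶜ` forces `A_{γx} ⊆ U`, and
quasi-invariance makes `{x | A_x ⊆ Vᶜ}` null as well. But a finite subset of the circle misses
some nonempty open set of a countable basis, so these countably many null sets cover `B`,
contradicting `ν B = 1`.
-/

noncomputable section

open MeasureTheory Set Function
open scoped ENNReal

open TopologicalSpace

instance {p : ℝ} [Fact (0 < p)] : Infinite (AddCircle p) :=
  (AddCircle.equivIco p 0).infinite_iff.2 (Ico_infinite (by simpa using Fact.out)).to_subtype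

theorem exists_nonempty_mem_countableBasis_subset_compl {X : Type*} [TopologicalSpace X]
    [SecondCountableTopology X] [T1Space X] [Infinite X] {s : Set X} (hs : s.Finite) :
    ∃ V ∈ countableBasis X, V.Nonempty ∧ s ⊆ Vᶜ := by
  obtain ⟨y, hy⟩ := hs.infinite_compl.nonempty
  obtain ⟨V, hVb, hyV, hVs⟩ :=
    (isBasis_countableBasis X).exists_subset_of_mem_open hy hs.isClosed.isOpen_compl
  exact ⟨V, hVb, ⟨y, hyV⟩, subset_compl_comm.1 hVs⟩

theorem measure_univ_eq_zero_of_forall_subset_compl_null {X B : Type*} [TopologicalSpace X]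
    [SecondCountableTopology X] [T1Space X] [Infinite X] [MeasurableSpace B] {ν : Measure B}
    (A : B → Finset X)
    (h : ∀ V : Set X, IsOpen V → V.Nonempty → ν {x | (A x : Set X) ⊆ Vᶜ} = 0) :
    ν univ = 0 := by
  have hcover : univ ⊆ ⋃ V ∈ {V ∈ countableBasis X | V.Nonempty},
      {x | (A x : Set X) ⊆ Vᶜ} := fun x _ => by
    obtain ⟨V, hVb, hVne, hV⟩ :=
      exists_nonempty_mem_countableBasis_subset_compl (A x).finite_toSet
    exact mem_biUnion ⟨hVb, hVne⟩ hV
  refine measure_mono_null hcover ((measure_biUnion_null_iff ?_).2 fun V hV => ?_)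
  · exact (countable_countableBasis X).mono (sep_subset _ _)
  · exact h V (isOpen_of_mem_countableBasis hV.1) hV.2

theorem measure_setOf_subset_null_of_image_subset {B X : Type*} [MeasurableSpace B]
    {ν : Measure B} {T : B → B} (hT : Measure.QuasiMeasurePreserving T ν ν) {g : X → X}
    (A : B → Set X) (hA : ∀ᵐ x ∂ν, A (T x) = g '' A x) {K U : Set X} (hKU : g '' K ⊆ U)
    (hU : ν {x | A x ⊆ U} = 0) : ν {x | A x ⊆ K} = 0 := by
  refine measure_mono_null_ae ?_ (hT.preimage_null hU)
  filter_upwards [hA] with x hx hxK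
  change A (T x) ⊆ U
  rw [hx]
  exact (image_mono hxK).trans hKU

theorem statement11_general {Γ B : Type*} [Group Γ]
    [MeasurableSpace B] [MulAction Γ B]
    (ν : Measure B) [IsProbabilityMeasure ν]
    (hact : ∀ γ : Γ, Measurable fun x : B => γ • x)
    (hqi : ∀ γ : Γ, Measure.map (fun x : B => γ • x) ν ≪ ν ∧
      ν ≪ Measure.map (fun x : B => γ • x) ν)
    (ρ : Γ →* (Circle' ≃ₜ Circle'))
    (hmsp : IsMinimalStronglyProximal ρ)
    (A : B → Finset Circle')
    (hAequiv : ∀ γ : Γ, ∀ᵐ x ∂ν, (A (γ • x) : Set Circle') = (ρ γ) '' (A x)) :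
    ∀ U : Set Circle', IsOpen U → U.Nonempty →
      0 < ν {x : B | (A x : Set Circle') ⊆ U} := by
  intro U hU hUne
  refine pos_iff_ne_zero.2 fun hUnull => ?_
  have hB : ν univ = 0 := measure_univ_eq_zero_of_forall_subset_compl_null A fun V hV hVne => by
    obtain ⟨γ, hγ⟩ := hmsp Vᶜ hV.isClosed_compl (compl_ne_univ.2 hVne) U hU hUne
    exact measure_setOf_subset_null_of_image_subset ⟨hact γ, (hqi γ).1⟩
      (fun x => (A x : Set Circle')) (hAequiv γ) hγ hUnull
  simp at hB

/-- If a group `Γ` acts on the circle minimally and strongly proximally, acts quasi-invariantly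
on a probability space `(B, ν)`, and `x ↦ A_x` is a measurable `Γ`-equivariant assignment of
`k`-point subsets of the circle, then for every nonempty open `U ⊆ S¹` the set
`{x : A_x ⊆ U}` has positive measure. -/
theorem statement11 {Γ B : Type*} [Group Γ]
    [MeasurableSpace B] [StandardBorelSpace B] [MulAction Γ B]
    (ν : Measure B) [IsProbabilityMeasure ν]
    (hact : ∀ γ : Γ, Measurable fun x : B => γ • x)
    (hqi : ∀ γ : Γ, Measure.map (fun x : B => γ • x) ν ≪ ν ∧
      ν ≪ Measure.map (fun x : B => γ • x) ν)
    (ρ : Γ →* (Circle' ≃ₜ Circle'))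
    (hmsp : IsMinimalStronglyProximal ρ)
    (k : ℕ) (hk : 1 ≤ k)
    (A : B → Finset Circle')
    (hAmeas : ∀ U : Set Circle', IsOpen U → MeasurableSet {x : B | (A x : Set Circle') ⊆ U})
    (hAcard : ∀ᵐ x ∂ν, (A x).card = k)
    (hAequiv : ∀ γ : Γ, ∀ᵐ x ∂ν, (A (γ • x) : Set Circle') = (ρ γ) '' (A x)) :
    ∀ U : Set Circle', IsOpen U → U.Nonempty →
      0 < ν {x : B | (A x : Set Circle') ⊆ U} :=
  statement11_general ν hact hqi ρ hmsp A hAequiv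
end
end

section
/- Let G be a locally compact, second countable Hausdorff topological group and Λ ≤ G a dense subgroup. Let ρ : Λ → Homeo₊(S¹) be a homomorphism whose action on S¹ is minimal and strongly proximal. Let (B, ν) be a standard probability space with a measurable quasi-invariant G-action such that for every measurable E ⊆ B the map g ↦ ν(gE △ E) is continuous on G. Suppose Φ : B → Prob(S¹) is a measurable map which is Λ-equivariant (for every λ ∈ Λ, Φ(λ·x) = ρ(λ)_*Φ(x) for ν-a.e. x), and suppose that for every nonempty open U ⊆ S¹ the set { x ∈ B : supp Φ(x) ⊆ U } has positive ν-measure. Then ρ extends uniquely to a continuous homomorphism ρ̄ : G → Homeo₊(S¹), where Homeo₊(S¹) carries the Polish topology of uniform convergence of homeomorphisms together with their inverses. -/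
noncomputable section

open MeasureTheory Set Function
open scoped ENNReal

/-!
If `l ∈ Λ` is close to `1` in `G`, it moves each of the positive-measure sets
`{x | Φ x is concentrated near i / m}` by less than its measure, so by quasi-invariance and
equivariance some `Φ x` and `(ρ l)_* Φ x` are both concentrated near `i / m`. Hence `ρ l` almost
fixes each tooth of the comb `(i / m)ᵢ`, and an orientation-preserving homeomorphism, being
squeezed between the teeth, is then uniformly close to the identity. So `ρ` is uniformly
continuous for the topology of `G` and extends, by completeness of `C(S¹, S¹)`, to a continuous
homomorphism of `G`. Orientation survives the limit because a homeomorphism uniformly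
`1/2`-close to an orientation-preserving one has a continuous degree-one lift.
-/

open Filter Topology

lemma coe_eq_coe_iff_exists_int {a b : ℝ} : (a : Circle') = b ↔ ∃ k : ℤ, a = b + k := by
  rw [eq_comm, QuotientAddGroup.eq, AddSubgroup.mem_zmultiples_iff]
  constructor
  · rintro ⟨k, hk⟩
    exact ⟨k, by rw [zsmul_one] at hk; linarith⟩
  · rintro ⟨k, rfl⟩
    exact ⟨k, by simp⟩

lemma coe_add_intCast (x : ℝ) (k : ℤ) : ((x + k : ℝ) : Circle') = x :=
  coe_eq_coe_iff_exists_int.2 ⟨k, rfl⟩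

lemma dist_coe_coe_le (a b : ℝ) (k : ℤ) : dist (a : Circle') b ≤ |a - b - k| := by
  rw [dist_eq_norm, ← AddCircle.coe_sub, ← coe_add_intCast (a - b) (-k), ← Real.norm_eq_abs]
  push_cast
  exact QuotientAddGroup.norm_mk_le_norm.trans_eq (by ring_nf)

lemma exists_coe_eq_abs_sub_eq_dist (z : Circle') (c : ℝ) :
    ∃ t : ℝ, (t : Circle') = z ∧ |t - c| = dist z c := by
  obtain ⟨a, rfl⟩ := QuotientAddGroup.mk_surjective z
  refine ⟨a + (-round (a - c) : ℤ), coe_add_intCast a _, ?_⟩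
  rw [dist_eq_norm, ← AddCircle.coe_sub, UnitAddCircle.norm_eq]
  push_cast
  ring_nf

lemma map_add_int_of_map_add_one {L : ℝ → ℝ} (hL : ∀ x, L (x + 1) = L x + 1) (x : ℝ) (k : ℤ) :
    L (x + k) = L x + k := by
  have hper : Function.Periodic (fun y => L y - y) 1 := fun y => by simp only [hL]; ring
  have := hper.int_mul k x
  simp only [mul_one] at this
  linarith

theorem isOrientationPreserving_of_continuous_lift {h : Circle' ≃ₜ Circle'} {L : ℝ → ℝ}
    (hcont : Continuous L) (hL : ∀ x, L (x + 1) = L x + 1) (hlift : ∀ x : ℝ, h x = L x) :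
    IsOrientationPreserving h := by
  have hinj : Injective L := by
    intro a b hab
    have hab' : h a = h b := by rw [hlift, hlift, hab]
    obtain ⟨k, rfl⟩ := coe_eq_coe_iff_exists_int.1 (h.injective hab')
    rw [map_add_int_of_map_add_one hL] at hab
    simpa using hab
  have hmono : StrictMono L := (hcont.strictMono_of_inj hinj).resolve_right fun hanti =>
    (hanti (lt_add_one 0)).not_ge (by rw [hL]; linarith)
  let L' : CircleDeg1Lift := ⟨⟨L, hmono.monotone⟩, hL⟩
  have hsurj : Surjective L := L'.continuous_iff_surjective.1 hcont
  exact ⟨(hmono.orderIsoOfSurjective L hsurj).toHomeomorph, hmono, hL, hlift⟩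

/-- The correction `δ` below is the representative of `h z - f z` in `[-1/2, 1/2)`;
it is continuous because `h z - f z` stays away from `1/2`. -/
theorem IsOrientationPreserving.of_dist_lt {f h : Circle' ≃ₜ Circle'}
    (hf : IsOrientationPreserving f) (hfh : dist (f : C(Circle', Circle')) h < 1 / 2) :
    IsOrientationPreserving h := by
  obtain ⟨F, -, hFper, hFlift⟩ := hf
  let δ : Circle' → ℝ := fun z => AddCircle.equivIco (1 : ℝ) (-(1 / 2)) (h z - f z)
  have hδ : Continuous δ := by
    refine continuous_iff_continuousAt.2 fun z => ?_
    have hne : h z - f z ≠ ((-(1 / 2) : ℝ) : Circle') := by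
      intro heq
      have hnorm : ‖h z - f z‖ < 1 / 2 := by
        rw [← dist_eq_norm, dist_comm]
        exact (ContinuousMap.dist_apply_le_dist (f := (f : C(Circle', Circle')))
          (g := (h : C(Circle', Circle'))) z).trans_lt hfh
      have hhalf := AddCircle.norm_half_period_eq 1
      rw [heq, AddCircle.coe_neg, norm_neg] at hnorm
      norm_num at hhalf hnorm
    exact continuous_subtype_val.continuousAt.comp <| ContinuousAt.comp
      (f := fun w => h w - f w) (AddCircle.continuousAt_equivIco (1 : ℝ) _ hne) (by fun_prop)
  refine isOrientationPreserving_of_continuous_lift (L := fun x => F x + δ x)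
    (F.continuous.add (hδ.comp (AddCircle.continuous_mk' 1))) (fun x => ?_) (fun x => ?_)
  · simp only [hFper, AddCircle.coe_add_period]
    ring
  · rw [AddCircle.coe_add, ← hFlift, AddCircle.coe_equivIco, add_sub_cancel]

section Comb

variable {F : ℝ → ℝ} {u : ℝ} {T : ℤ → ℝ} {K : ℤ → ℤ}

lemma comb_offset_succ (hF : StrictMono F) (hF1 : ∀ x, F (x + 1) = F x + 1) (hu : 0 < u)
    (hu' : u ≤ 1 / 2) (hT : ∀ j : ℤ, |T j - j * u| ≤ u / 4)
    (hK : ∀ j : ℤ, |F (T j) - j * u - K j| ≤ u / 4) (j : ℤ) : K (j + 1) = K j := by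
  have hT₀ := abs_le.1 (hT j)
  have hT₁ := abs_le.1 (hT (j + 1))
  have hK₀ := abs_le.1 (hK j)
  have hK₁ := abs_le.1 (hK (j + 1))
  push_cast at hT₁ hK₁
  have hlt : F (T j) < F (T (j + 1)) := hF (by nlinarith)
  have hlt' : F (T (j + 1)) < F (T j) + 1 := hF1 (T j) ▸ hF (by nlinarith)
  have h₁ : (K (j + 1) : ℝ) < K j + 1 := by nlinarith
  have h₂ : (K j : ℝ) < K (j + 1) + 1 := by nlinarith
  norm_cast at h₁ h₂
  omega

/-- `K` is constant because consecutive teeth `T j` are less than a period apart. -/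
lemma abs_sub_sub_le_of_comb (hF : StrictMono F) (hF1 : ∀ x, F (x + 1) = F x + 1) (hu : 0 < u)
    (hu' : u ≤ 1 / 2) (hT : ∀ j : ℤ, |T j - j * u| ≤ u / 4)
    (hK : ∀ j : ℤ, |F (T j) - j * u - K j| ≤ u / 4) (s : ℝ) : |F s - s - K 0| ≤ 4 * u := by
  have hKconst : ∀ j, K j = K 0 := fun j => by
    simpa using Function.Periodic.int_mul_eq (c := 1) (comb_offset_succ hF hF1 hu hu' hT hK) j
  set j := ⌊s / u⌋
  have hj := Int.floor_le (s / u)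
  have hj' := Int.lt_floor_add_one (s / u)
  rw [le_div_iff₀ hu] at hj
  rw [div_lt_iff₀ hu] at hj'
  have hlo := abs_le.1 (hT (j - 1))
  have hhi := abs_le.1 (hT (j + 2))
  have hKlo := abs_le.1 (hK (j - 1))
  have hKhi := abs_le.1 (hK (j + 2))
  rw [hKconst] at hKlo hKhi
  push_cast at hlo hhi hKlo hKhi
  have hFlo : F (T (j - 1)) ≤ F s := hF.monotone (by nlinarith)
  have hFhi : F s ≤ F (T (j + 2)) := hF.monotone (by nlinarith)
  rw [abs_le]
  constructor <;> nlinarith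

end Comb

theorem IsOrientationPreserving.dist_apply_le {h : Circle' ≃ₜ Circle'}
    (hh : IsOrientationPreserving h) {u : ℝ} (hu : 0 < u) (hu' : u ≤ 1 / 2)
    (hcomb : ∀ j : ℤ, ∃ w : Circle',
      dist w ((j * u : ℝ) : Circle') ≤ u / 4 ∧ dist (h w) ((j * u : ℝ) : Circle') ≤ u / 4)
    (z : Circle') : dist (h z) z ≤ 4 * u := by
  obtain ⟨F, hF, hF1, hlift⟩ := hh
  choose w hw hhw using hcomb
  choose T hTw hT using fun j => exists_coe_eq_abs_sub_eq_dist (w j) (j * u)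
  choose S hSw hS using fun j => exists_coe_eq_abs_sub_eq_dist (h (w j)) (j * u)
  have hK : ∀ j, ∃ k : ℤ, F (T j) = S j + k := fun j =>
    coe_eq_coe_iff_exists_int.1 (by rw [← hlift, hTw, hSw])
  choose K hK using hK
  obtain ⟨s, rfl⟩ := QuotientAddGroup.mk_surjective z
  calc dist (h s) (s : Circle') = dist ((F s : ℝ) : Circle') s := by rw [hlift]
    _ ≤ |F s - s - K 0| := dist_coe_coe_le _ _ _
    _ ≤ 4 * u := abs_sub_sub_le_of_comb hF hF1 hu hu' (fun j => (hT j).trans_le (hw j))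
        (fun j => by rw [hK, add_sub_right_comm, add_sub_cancel_right, hS]; exact hhw j) s

section Measure

variable {G B : Type*} [Group G] [MulAction G B] [MeasurableSpace B] {ν : Measure B}

lemma exists_mem_smul_mem_of_measure_symmDiff_lt {g : G}
    (hmeas : Measurable fun x : B => g⁻¹ • x) (hqi : ν.map (fun x : B => g⁻¹ • x) ≪ ν) {A : Set B}
    (hA : ν (symmDiff ((fun x : B => g • x) '' A) A) < ν A) {p : B → Prop} (hp : ∀ᵐ x ∂ν, p x) :
    ∃ x ∈ A, g • x ∈ A ∧ p x := by
  have hpos : ν ((fun x : B => g • x) '' A ∩ A) ≠ 0 := by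
    intro h0
    refine (measure_le_inter_add_sdiff ν A ((fun x : B => g • x) '' A)).not_gt ?_
    rw [inter_comm, h0, zero_add]
    exact (measure_mono subset_union_right).trans_lt hA
  obtain ⟨y, ⟨⟨x, hxA, rfl⟩, hyA⟩, hpx⟩ := Measure.exists_mem_of_measure_ne_zero_of_ae hpos
    (ae_restrict_of_ae (ae_of_ae_map hmeas.aemeasurable (hqi.ae_le hp)))
  exact ⟨x, hxA, hyA, by simpa using hpx⟩

lemma exists_mem_apply_mem_of_equivariant {Y : Type*} [MeasurableSpace Y] {g : G}
    (hmeas : Measurable fun x : B => g⁻¹ • x) (hqi : ν.map (fun x : B => g⁻¹ • x) ≪ ν)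
    {Φ : B → Measure Y} (hΦ : ∀ x, IsProbabilityMeasure (Φ x)) {f : Y → Y} (hf : Measurable f)
    (hequiv : ∀ᵐ x ∂ν, Φ (g • x) = (Φ x).map f) {s : Set Y}
    (hs : ν (symmDiff ((fun x : B => g • x) '' {x | Φ x sᶜ = 0}) {x | Φ x sᶜ = 0}) <
      ν {x | Φ x sᶜ = 0}) :
    ∃ y ∈ s, f y ∈ s := by
  obtain ⟨x, hx, hgx, hΦx⟩ := exists_mem_smul_mem_of_measure_symmDiff_lt hmeas hqi hs hequiv
  have h₁ : ∀ᵐ y ∂Φ x, y ∈ s := hx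
  have h₂ : ∀ᵐ y ∂Φ x, f y ∈ s := ae_of_ae_map hf.aemeasurable (by rw [← hΦx]; exact hgx)
  exact (h₁.and h₂).exists

end Measure

lemma measSupport_eq_support (μ : Measure Circle') : measSupport μ = μ.support := by
  ext p
  rw [(nhds_basis_opens p).mem_measureSupport]
  simp only [measSupport, pos_iff_ne_zero, and_imp]
  exact forall_congr' fun U => forall_comm

lemma eventually_dist_apply_le {G B : Type*} [Group G] [TopologicalSpace G] [MulAction G B]
    [MeasurableSpace B] {Λ : Subgroup G} (ρ : Λ →* (Circle' ≃ₜ Circle'))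
    (hop : ∀ l : Λ, IsOrientationPreserving (ρ l)) (ν : Measure B)
    (hact : ∀ g : G, Measurable fun x : B => g • x)
    (hqi : ∀ g : G, Measure.map (fun x : B => g • x) ν ≪ ν)
    (hcont : ∀ E : Set B, MeasurableSet E →
      Continuous fun g : G => ν (symmDiff ((fun x : B => g • x) '' E) E))
    (Φ : B → Measure Circle') (hΦprob : ∀ x : B, IsProbabilityMeasure (Φ x))
    (hΦmeas : ∀ s : Set Circle', MeasurableSet s → Measurable fun x : B => Φ x s)
    (hΦequiv : ∀ l : Λ, ∀ᵐ x ∂ν, Φ ((l : G) • x) = Measure.map (ρ l) (Φ x))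
    (hsupp : ∀ U : Set Circle', IsOpen U → U.Nonempty → 0 < ν {x : B | measSupport (Φ x) ⊆ U})
    {m : ℕ} {u : ℝ} (hm : 2 ≤ m) (hmu : m * u = 1) :
    ∀ᶠ l : Λ in comap Subtype.val (𝓝 1), ∀ z, dist (ρ l z) z ≤ 4 * u := by
  have hu : 0 < u := pos_of_mul_pos_right (hmu ▸ one_pos) m.cast_nonneg
  have hu' : u ≤ 1 / 2 := by
    have : (2 : ℝ) ≤ m := by exact_mod_cast hm
    nlinarith
  let A : ℤ → Set B := fun i => {x | Φ x (Metric.ball ((i * u : ℝ) : Circle') (u / 4))ᶜ = 0}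
  have hApos : ∀ i, 0 < ν (A i) := fun i =>
    (hsupp _ Metric.isOpen_ball ⟨_, Metric.mem_ball_self (by positivity)⟩).trans_le <|
      measure_mono fun x hx => measure_mono_null (compl_subset_compl.2 hx) <| by
        rw [measSupport_eq_support, Measure.measure_compl_support]
  have hnear : ∀ᶠ g in 𝓝 (1 : G), ∀ i ∈ Ico (0 : ℤ) m,
      ν (symmDiff ((fun x : B => g • x) '' A i) (A i)) < ν (A i) :=
    (eventually_all_finite (finite_Ico _ _)).2 fun i _ =>
      (hcont _ (hΦmeas _ Metric.isOpen_ball.measurableSet.compl (measurableSet_singleton 0))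
        ).continuousAt.eventually_lt continuousAt_const (by simpa using hApos i)
  filter_upwards [hnear.comap _] with l hl
  refine (hop l).dist_apply_le hu hu' fun j => ?_
  have hj : ((j * u : ℝ) : Circle') = (((j % m : ℤ) * u : ℝ) : Circle') := by
    rw [← coe_add_intCast (((j % m : ℤ) : ℝ) * u) (j / m)]
    congr 1
    have := congrArg (Int.cast : ℤ → ℝ) (Int.emod_add_mul_ediv j m)
    push_cast at this
    linear_combination (-u) * this + ((j / m : ℤ) : ℝ) * hmu
  rw [hj]
  obtain ⟨w, hw, hlw⟩ := exists_mem_apply_mem_of_equivariant (hact _) (hqi _) hΦprob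
    (ρ l).continuous.measurable (hΦequiv l)
    (hl _ ⟨Int.emod_nonneg _ (by omega), Int.emod_lt_of_pos _ (by omega)⟩)
  exact ⟨w, (Metric.mem_ball.1 hw).le, (Metric.mem_ball.1 hlw).le⟩

lemma dist_toContinuousMap_le {Γ X : Type*} [Group Γ] [MetricSpace X] [CompactSpace X]
    (ρ : Γ →* (X ≃ₜ X)) (l l' : Γ) :
    dist (ρ l : C(X, X)) (ρ l') ≤ dist (ρ (l * l'⁻¹) : C(X, X)) (ContinuousMap.id X) := by
  refine (ContinuousMap.dist_le dist_nonneg).2 fun x => ?_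
  have hx : ρ l x = ρ (l * l'⁻¹) (ρ l' x) := by
    rw [← homeo_mul_apply, ← map_mul, inv_mul_cancel_right]
  calc dist (ρ l x) (ρ l' x) = dist (ρ (l * l'⁻¹) (ρ l' x)) (ρ l' x) := by rw [hx]
    _ ≤ _ := ContinuousMap.dist_apply_le_dist (f := (ρ (l * l'⁻¹) : C(X, X)))
        (g := ContinuousMap.id X) (ρ l' x)

section Extension

variable {G X : Type*} [Group G] [TopologicalSpace G] [IsTopologicalGroup G]
  [MetricSpace X] [CompactSpace X] {Λ : Subgroup G}

lemma cauchy_map_comap_nhds (hΛ : Dense (Λ : Set G)) (ρ : Λ →* (X ≃ₜ X))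
    (hρ : Tendsto (fun l : Λ => (ρ l : C(X, X))) (comap Subtype.val (𝓝 1))
      (𝓝 (ContinuousMap.id X)))
    (g : G) : Cauchy (map (fun l : Λ => (ρ l : C(X, X))) (comap Subtype.val (𝓝 g))) := by
  have hdiv : Tendsto (fun p : Λ × Λ => p.1 * p.2⁻¹)
      (comap Subtype.val (𝓝 g) ×ˢ comap Subtype.val (𝓝 g)) (comap Subtype.val (𝓝 1)) := by
    refine tendsto_comap_iff.2 ?_
    simpa [Function.comp_def] using
      ((tendsto_comap.comp tendsto_fst).mul (tendsto_comap.comp tendsto_snd).inv :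
        Tendsto (fun p : Λ × Λ => (p.1 : G) * (p.2 : G)⁻¹) _ (𝓝 (g * g⁻¹)))
  refine cauchy_map_iff.2 ⟨hΛ.isDenseInducing_val.comap_nhds_neBot g,
    Metric.uniformity_basis_dist.tendsto_right_iff.2 fun ε hε => ?_⟩
  filter_upwards [hdiv.eventually (hρ.eventually (Metric.ball_mem_nhds _ hε))] with p hp
  exact (dist_toContinuousMap_le ρ p.1 p.2).trans_lt hp

theorem exists_continuous_extension (hΛ : Dense (Λ : Set G)) (ρ : Λ →* (X ≃ₜ X))
    (hρ : Tendsto (fun l : Λ => (ρ l : C(X, X))) (comap Subtype.val (𝓝 1))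
      (𝓝 (ContinuousMap.id X))) :
    ∃ ρbar : G →* (X ≃ₜ X), Continuous (fun g => (ρbar g : C(X, X))) ∧
      Continuous (fun g => ((ρbar g).symm : C(X, X))) ∧ ∀ l : Λ, ρbar l = ρ l := by
  have di := hΛ.isDenseInducing_val
  have hlim : ∀ g : G, ∃ c,
      Tendsto (fun l : Λ => (ρ l : C(X, X))) (comap Subtype.val (𝓝 g)) (𝓝 c) :=
    fun g => CompleteSpace.complete (cauchy_map_comap_nhds hΛ ρ hρ g)
  set E := di.extend fun l : Λ => (ρ l : C(X, X))
  have hE : Continuous E := di.continuous_extend hlim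
  have hEΛ : ∀ l : Λ, E l = ρ l := di.extend_eq' hlim
  have hEmul : ∀ g h, E (g * h) = (E g).comp (E h) := hΛ.denseRange_val.induction_on₂
    (isClosed_eq (hE.comp continuous_mul)
      (ContinuousMap.continuous_comp'.comp
        ((hE.comp continuous_snd).prodMk (hE.comp continuous_fst))))
    fun a b => by
      rw [← Subgroup.coe_mul, hEΛ, hEΛ, hEΛ, map_mul]
      rfl
  have hEone : E 1 = ContinuousMap.id X := by
    rw [← Subgroup.coe_one, hEΛ, map_one]
    rfl
  have hEinv : ∀ g, (E g⁻¹).comp (E g) = ContinuousMap.id X := fun g => by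
    rw [← hEmul, inv_mul_cancel, hEone]
  have hEinv' : ∀ g, (E g).comp (E g⁻¹) = ContinuousMap.id X := fun g => by
    simpa using hEinv g⁻¹
  let ρbar : G →* (X ≃ₜ X) :=
    { toFun := fun g =>
        { toFun := E g
          invFun := E g⁻¹
          left_inv := fun x => ContinuousMap.congr_fun (hEinv g) x
          right_inv := fun x => ContinuousMap.congr_fun (hEinv' g) x }
      map_one' := Homeomorph.ext fun x => ContinuousMap.congr_fun hEone x
      map_mul' := fun g h => Homeomorph.ext fun x => ContinuousMap.congr_fun (hEmul g h) x }
  refine ⟨ρbar, hE, hE.comp continuous_inv, fun l => Homeomorph.ext fun x => ?_⟩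
  exact ContinuousMap.congr_fun (hEΛ l) x

end Extension

theorem statement13_general {G B : Type*} [Group G] [TopologicalSpace G] [IsTopologicalGroup G]
    (Λ : Subgroup G) (hdense : Dense (Λ : Set G))
    (ρ : Λ →* (Circle' ≃ₜ Circle'))
    (hop : ∀ l : Λ, IsOrientationPreserving (ρ l))
    [MeasurableSpace B] [MulAction G B]
    (ν : Measure B)
    (hact : ∀ g : G, Measurable fun x : B => g • x)
    (hqi : ∀ g : G, Measure.map (fun x : B => g • x) ν ≪ ν ∧
      ν ≪ Measure.map (fun x : B => g • x) ν)
    (hcont : ∀ E : Set B, MeasurableSet E →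
      Continuous fun g : G => ν (symmDiff ((fun x : B => g • x) '' E) E))
    (Φ : B → Measure Circle')
    (hΦprob : ∀ x : B, IsProbabilityMeasure (Φ x))
    (hΦmeas : ∀ s : Set Circle', MeasurableSet s → Measurable fun x : B => Φ x s)
    (hΦequiv : ∀ l : Λ, ∀ᵐ x ∂ν, Φ ((l : G) • x) = Measure.map (ρ l) (Φ x))
    (hsupp : ∀ U : Set Circle', IsOpen U → U.Nonempty →
      0 < ν {x : B | measSupport (Φ x) ⊆ U}) :
    ∃! ρbar : G →* (Circle' ≃ₜ Circle'),
      (Continuous fun g : G => ((ρbar g : Circle' ≃ₜ Circle') : C(Circle', Circle'))) ∧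
      (Continuous fun g : G => (((ρbar g).symm : Circle' ≃ₜ Circle') : C(Circle', Circle'))) ∧
      (∀ g : G, IsOrientationPreserving (ρbar g)) ∧
      (∀ l : Λ, ρbar (l : G) = ρ l) := by
  have hρ : Tendsto (fun l : Λ => (ρ l : C(Circle', Circle'))) (comap Subtype.val (𝓝 1))
      (𝓝 (ContinuousMap.id _)) := by
    refine Metric.tendsto_nhds.2 fun ε hε => ?_
    obtain ⟨m, hm, hmε⟩ : ∃ m : ℕ, 2 ≤ m ∧ 4 / ε < m :=
      ⟨⌈4 / ε⌉₊ + 2, by omega, by push_cast; linarith [Nat.le_ceil (4 / ε)]⟩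
    have hm0 : (0 : ℝ) < m := by positivity
    filter_upwards [eventually_dist_apply_le ρ hop ν hact (fun g => (hqi g).1) hcont Φ hΦprob
      hΦmeas hΦequiv hsupp hm (mul_one_div_cancel hm0.ne')] with l hl
    refine ((ContinuousMap.dist_le (by positivity)).2 hl).trans_lt ?_
    rw [div_lt_iff₀ hε] at hmε
    rw [← div_eq_mul_one_div, div_lt_iff₀ hm0]
    linarith
  obtain ⟨ρbar, hc, hcinv, hext⟩ := exists_continuous_extension hdense ρ hρ
  refine ⟨ρbar, ⟨hc, hcinv, fun g => ?_, hext⟩, fun ρ' ⟨hc', _, _, hext'⟩ => ?_⟩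
  · obtain ⟨l, hlΛ, hl⟩ := hdense.exists_mem_open (Metric.isOpen_ball.preimage hc)
      ⟨g, Metric.mem_ball_self one_half_pos⟩
    exact (hop ⟨l, hlΛ⟩).of_dist_lt (by rw [← hext]; exact hl)
  · have hEq := Continuous.ext_on hdense hc' hc fun l hl => by
      change (ρ' (⟨l, hl⟩ : Λ) : C(Circle', Circle')) = ρbar (⟨l, hl⟩ : Λ)
      rw [hext, hext']
    exact MonoidHom.ext fun g => Homeomorph.ext (ContinuousMap.congr_fun (congrFun hEq g))

/-- Extending a minimal strongly proximal action of a dense subgroup `Λ` of a locally compact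
second countable group `G`: given a quasi-invariant `G`-space `(B, ν)` with continuous
translation on measurable sets and a `Λ`-equivariant map `Φ : B → Prob(S¹)` whose values are
supported inside every nonempty open set with positive probability, the action `ρ` extends
uniquely to a continuous homomorphism `G → Homeo₊(S¹)`, where `Homeo₊(S¹)` carries the
topology of uniform convergence of homeomorphisms together with their inverses. -/
theorem statement13 {G B : Type*} [Group G] [TopologicalSpace G] [IsTopologicalGroup G]
    [LocallyCompactSpace G] [SecondCountableTopology G] [T2Space G]
    (Λ : Subgroup G) (hdense : Dense (Λ : Set G))
    (ρ : Λ →* (Circle' ≃ₜ Circle'))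
    (hop : ∀ l : Λ, IsOrientationPreserving (ρ l))
    (hmsp : IsMinimalStronglyProximal ρ)
    [MeasurableSpace B] [StandardBorelSpace B] [MulAction G B]
    (ν : Measure B) [IsProbabilityMeasure ν]
    (hact : ∀ g : G, Measurable fun x : B => g • x)
    (hqi : ∀ g : G, Measure.map (fun x : B => g • x) ν ≪ ν ∧
      ν ≪ Measure.map (fun x : B => g • x) ν)
    (hcont : ∀ E : Set B, MeasurableSet E →
      Continuous fun g : G => ν (symmDiff ((fun x : B => g • x) '' E) E))
    (Φ : B → Measure Circle')
    (hΦprob : ∀ x : B, IsProbabilityMeasure (Φ x))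
    (hΦmeas : ∀ s : Set Circle', MeasurableSet s → Measurable fun x : B => Φ x s)
    (hΦequiv : ∀ l : Λ, ∀ᵐ x ∂ν, Φ ((l : G) • x) = Measure.map (ρ l) (Φ x))
    (hsupp : ∀ U : Set Circle', IsOpen U → U.Nonempty →
      0 < ν {x : B | measSupport (Φ x) ⊆ U}) :
    ∃! ρbar : G →* (Circle' ≃ₜ Circle'),
      (Continuous fun g : G => ((ρbar g : Circle' ≃ₜ Circle') : C(Circle', Circle'))) ∧
      (Continuous fun g : G => (((ρbar g).symm : Circle' ≃ₜ Circle') : C(Circle', Circle'))) ∧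
      (∀ g : G, IsOrientationPreserving (ρbar g)) ∧
      (∀ l : Λ, ρbar (l : G) = ρ l) :=
  statement13_general Λ hdense ρ hop ν hact hqi hcont Φ hΦprob hΦmeas hΦequiv hsupp
end
end

section
/- Let Λ be a group acting on a set B, Γ ≤ Λ a subgroup, and ρ : Λ → Homeo(S¹) a homomorphism, with the induced affine action on Borel probability measures by pushforward. Fix λ ∈ Λ and suppose Γ'_λ = Γ ∩ λ⁻¹Γλ has finite index n in Γ; let g₁, …, g_n ∈ Γ be representatives of the right cosets Γ'_λ\Γ, so Γ is the disjoint union of the cosets Γ'_λ g_i. Let Φ : B → Prob(S¹) satisfy Φ(γ·x) = ρ(γ)_*Φ(x) for all γ ∈ Γ and all x ∈ B. Define Φ_λ : B → Prob(S¹) by Φ_λ(x) = (1/n) Σ_{i=1}^{n} ρ(g_i⁻¹)_* ρ(λ⁻¹)_* Φ(λ g_i · x). Then Φ_λ is Γ-equivariant: Φ_λ(γ·x) = ρ(γ)_*Φ_λ(x) for all γ ∈ Γ and all x ∈ B. -/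
noncomputable section

open MeasureTheory Set Function
open scoped ENNReal

/-! Right multiplication by `γ ∈ Γ` permutes the cosets `Γ'_λ gᵢ`: `gᵢ γ = δᵢ g_{σ i}` with
`δᵢ ∈ Γ'_λ`, so `λ δᵢ λ⁻¹ ∈ Γ`. Equivariance of `Φ` under `λ δᵢ λ⁻¹` then turns the `i`-th summand
of `Φ_λ(γ x)` into `ρ(γ)_*` of the `σ i`-th summand of `Φ_λ(x)`, and reindexing by `σ` finishes. -/

section CosetRepresentatives

variable {G : Type*} [Group G] {Γ H : Subgroup G} {ι : Type*} [Finite ι] {g : ι → G}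

lemma exists_perm_mul_mul_inv_mem (hg : ∀ i, g i ∈ Γ)
    (hcoset : ∀ γ ∈ Γ, ∃! i, γ * (g i)⁻¹ ∈ H) {γ : G} (hγ : γ ∈ Γ) :
    ∃ σ : Equiv.Perm ι, ∀ i, g i * γ * (g (σ i))⁻¹ ∈ H := by
  choose σ hσ using fun i => (hcoset (g i * γ) (Γ.mul_mem (hg i) hγ)).exists
  have hσinj : Injective σ := by
    intro i j hij
    have hij' : g i * (g j)⁻¹ ∈ H := by
      have := H.mul_mem (hσ i) (H.inv_mem (hσ j))
      rwa [hij, show g i * γ * (g (σ j))⁻¹ * (g j * γ * (g (σ j))⁻¹)⁻¹ = g i * (g j)⁻¹ by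
        group] at this
    exact (hcoset (g i) (hg i)).unique (by simp [H.one_mem]) hij'
  exact ⟨Equiv.ofBijective σ (Finite.injective_iff_bijective.mp hσinj), hσ⟩

end CosetRepresentatives

lemma mul_mul_inv_mem_of_mem_map_conj_inv {G : Type*} [Group G] {Γ : Subgroup G} {l δ : G}
    (h : δ ∈ Γ.map (MulAut.conj l⁻¹).toMonoidHom) : l * δ * l⁻¹ ∈ Γ := by
  obtain ⟨a, ha, rfl⟩ := h
  simpa [mul_assoc] using ha

section Pushforward

variable {X : Type*} [TopologicalSpace X] [MeasurableSpace X] [BorelSpace X]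
  {Λ : Type*} [Group Λ] (ρ : Λ →* (X ≃ₜ X))

lemma map_map_monoidHom (a b : Λ) (μ : Measure X) :
    (μ.map (ρ b)).map (ρ a) = μ.map (ρ (a * b)) := by
  rw [Measure.map_map (ρ a).measurable (ρ b).measurable, map_mul]
  rfl

lemma map_inv_apply_smul_smul {B : Type*} [MulAction Λ B] {Γ : Subgroup Λ}
    {Φ : B → Measure X} (hΦ : ∀ γ ∈ Γ, ∀ x : B, Φ (γ • x) = (Φ x).map (ρ γ))
    {c d γ : Λ} (hcd : c * γ * d⁻¹ ∈ Γ) (x : B) :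
    (Φ (c • γ • x)).map (ρ c⁻¹) = ((Φ (d • x)).map (ρ d⁻¹)).map (ρ γ) := by
  have hx : c • γ • x = (c * γ * d⁻¹) • d • x := by simp [smul_smul]
  rw [hx, hΦ _ hcd, map_map_monoidHom, map_map_monoidHom]
  congr 2
  group

end Pushforward

theorem statement16_general {Λ B : Type*} [Group Λ] [MulAction Λ B]
    (Γ : Subgroup Λ) (ρ : Λ →* (Circle' ≃ₜ Circle'))
    (l : Λ) (n : ℕ)
    (Γ' : Subgroup Λ)
    (hΓ' : Γ' = Γ ⊓ Subgroup.map (MulAut.conj l⁻¹).toMonoidHom Γ)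
    (g : Fin n → Λ) (hg : ∀ i, g i ∈ Γ)
    (hcoset : ∀ γ ∈ Γ, ∃! i : Fin n, γ * (g i)⁻¹ ∈ Γ')
    (Φ : B → Measure Circle')
    (hΦequiv : ∀ γ ∈ Γ, ∀ x : B, Φ (γ • x) = Measure.map (ρ γ) (Φ x))
    (Φl : B → Measure Circle')
    (hΦl : ∀ x : B, Φl x = (n : ℝ≥0∞)⁻¹ • ∑ i : Fin n,
      Measure.map (ρ (g i)⁻¹) (Measure.map (ρ l⁻¹) (Φ ((l * g i) • x)))) :
    ∀ γ ∈ Γ, ∀ x : B, Φl (γ • x) = Measure.map (ρ γ) (Φl x) := by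
  intro γ hγ x
  obtain ⟨σ, hσ⟩ := exists_perm_mul_mul_inv_mem hg hcoset hγ
  have hterm : ∀ i, ((Φ ((l * g i) • γ • x)).map (ρ l⁻¹)).map (ρ (g i)⁻¹) =
      (((Φ ((l * g (σ i)) • x)).map (ρ l⁻¹)).map (ρ (g (σ i))⁻¹)).map (ρ γ) := by
    intro i
    rw [map_map_monoidHom ρ (g i)⁻¹, map_map_monoidHom ρ (g (σ i))⁻¹, ← mul_inv_rev,
      ← mul_inv_rev]
    apply map_inv_apply_smul_smul ρ hΦequiv
    have hδ := hσ i
    rw [hΓ'] at hδ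
    simpa only [mul_assoc, mul_inv_rev] using mul_mul_inv_mem_of_mem_map_conj_inv hδ.2
  rw [hΦl, hΦl, Measure.map_smul, Measure.map_finset_sum' (ρ γ).measurable.aemeasurable,
    Finset.sum_congr rfl fun i _ => hterm i, Equiv.sum_comp σ
      (fun j => (((Φ ((l * g j) • x)).map (ρ l⁻¹)).map (ρ (g j)⁻¹)).map (ρ γ))]

/-- The averaged map `Φ_λ(x) = (1/n) Σᵢ ρ(gᵢ⁻¹)_* ρ(λ⁻¹)_* Φ(λ gᵢ · x)` associated to a
`Γ`-equivariant map `Φ : B → Prob(S¹)` and a commensurating element `λ` with coset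
representatives `g₁, …, g_n` of `Γ'_λ\Γ` is again `Γ`-equivariant. -/
theorem statement16 {Λ B : Type*} [Group Λ] [MulAction Λ B]
    (Γ : Subgroup Λ) (ρ : Λ →* (Circle' ≃ₜ Circle'))
    (l : Λ) (n : ℕ) (hn : 0 < n)
    (Γ' : Subgroup Λ)
    (hΓ' : Γ' = Γ ⊓ Subgroup.map (MulAut.conj l⁻¹).toMonoidHom Γ)
    (g : Fin n → Λ) (hg : ∀ i, g i ∈ Γ)
    (hcoset : ∀ γ ∈ Γ, ∃! i : Fin n, γ * (g i)⁻¹ ∈ Γ')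
    (Φ : B → Measure Circle')
    (hΦprob : ∀ x : B, IsProbabilityMeasure (Φ x))
    (hΦequiv : ∀ γ ∈ Γ, ∀ x : B, Φ (γ • x) = Measure.map (ρ γ) (Φ x))
    (Φl : B → Measure Circle')
    (hΦl : ∀ x : B, Φl x = (n : ℝ≥0∞)⁻¹ • ∑ i : Fin n,
      Measure.map (ρ (g i)⁻¹) (Measure.map (ρ l⁻¹) (Φ ((l * g i) • x)))) :
    ∀ γ ∈ Γ, ∀ x : B, Φl (γ • x) = Measure.map (ρ γ) (Φl x) :=
  statement16_general Γ ρ l n Γ' hΓ' g hg hcoset Φ hΦequiv Φl hΦl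
end
end
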